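/- arXiv:2106.10429 — 6 statements merged into one kernel-verified Lean document; each statement's English description precedes it below -/
import Mathlib

section
/- Let X be a simplicial complex with finite edge-path systole, and set r := ⌊sys X / 2⌋ − 1. Then every metric ball B(x, r) ⊆ V(X) is inessential, and r is the maximum integer with this property; that is, the homotopy triviality radius of X equals ⌊sys X / 2⌋ − 1. -/
/-!
Closed edge-paths shorter than the systole are null-homotopic. In a ball `B(x, r)` with
`2r + 1 < sys X` every loop can therefore be coned off to the centre: an edge together with the
two radii to its endpoints is a loop of length at most `2r + 1`. Conversely, an essential loop of
length exactly `sys X` lies in the ball of radius `⌊sys X / 2⌋` around its basepoint, since every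
vertex on it is reached by the shorter of its two arcs. So all balls of radius `r` are
inessential iff `2r + 1 < sys X`, and the largest such `r` is `⌊sys X / 2⌋ - 1`.
-/

/-- An abstract simplicial complex on vertex type `V`: a downward-closed family of
nonempty finite sets of vertices containing all singletons. -/
structure SComplex (V : Type) where
  faces : Set (Finset V)
  nonempty_of_mem : ∀ s ∈ faces, s.Nonempty
  down_closed : ∀ s ∈ faces, ∀ t ⊆ s, t.Nonempty → t ∈ faces
  singleton_mem : ∀ v : V, {v} ∈ faces

variable {V : Type} [DecidableEq V]

/-- The 1-skeleton of a simplicial complex, as a simple graph on the vertices. -/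
def SComplex.graph (X : SComplex V) : SimpleGraph V where
  Adj u v := u ≠ v ∧ ({u, v} : Finset V) ∈ X.faces
  symm := ⟨fun u v h => ⟨h.1.symm, Finset.pair_comm u v ▸ h.2⟩⟩
  loopless := ⟨fun v h => h.1 rfl⟩

/-- Combinatorial (edge-path) homotopy rel endpoints between edge-walks in a simplicial
complex: the equivalence generated by removing backtracks and by replacing two sides
of a 2-face by the third side.  Two walks are edge-homotopic iff the corresponding
paths in the geometric realization are homotopic rel endpoints. -/
inductive SComplex.EdgeHomotopic (X : SComplex V) :
    ∀ {u v : V}, X.graph.Walk u v → X.graph.Walk u v → Prop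
  | refl {u v : V} (p : X.graph.Walk u v) : EdgeHomotopic X p p
  | symm {u v : V} {p q : X.graph.Walk u v} : EdgeHomotopic X p q → EdgeHomotopic X q p
  | trans {u v : V} {p q r : X.graph.Walk u v} :
      EdgeHomotopic X p q → EdgeHomotopic X q r → EdgeHomotopic X p r
  | cons {u v w : V} (h : X.graph.Adj u v) {p q : X.graph.Walk v w} :
      EdgeHomotopic X p q →
      EdgeHomotopic X (SimpleGraph.Walk.cons h p) (SimpleGraph.Walk.cons h q)
  | backtrack {u v w : V} (h : X.graph.Adj u v) (p : X.graph.Walk u w) :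
      EdgeHomotopic X (SimpleGraph.Walk.cons h (SimpleGraph.Walk.cons h.symm p)) p
  | triangle {u v w z : V} (huv : X.graph.Adj u v) (hvw : X.graph.Adj v w)
      (huw : X.graph.Adj u w) (hface : ({u, v, w} : Finset V) ∈ X.faces)
      (p : X.graph.Walk w z) :
      EdgeHomotopic X (SimpleGraph.Walk.cons huv (SimpleGraph.Walk.cons hvw p))
        (SimpleGraph.Walk.cons huw p)

/-- A closed edge-path is null-homotopic if it is edge-homotopic to the constant path. -/
def SComplex.NullHomotopic (X : SComplex V) {x : V} (p : X.graph.Walk x x) : Prop :=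
  X.EdgeHomotopic p SimpleGraph.Walk.nil

/-- The edge-path systole: the least length of a closed edge-path that is not
null-homotopic (so every closed edge-path of length `< sys X` is null-homotopic,
and `sys X` is the largest such integer); it is `+∞` if every closed edge-path
is null-homotopic (e.g. if `X` is simply connected). -/
noncomputable def SComplex.sys (X : SComplex V) : ℕ∞ :=
  sInf {n : ℕ∞ | ∃ (x : V) (p : X.graph.Walk x x), ¬ X.NullHomotopic p ∧ (p.length : ℕ∞) = n}

/-- A set `Y` of vertices is inessential if every closed edge-path all of whose vertices
lie in `Y` (equivalently, every loop in a connected component of the induced subcomplex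
`⟨Y⟩`) is null-homotopic in `X`;  this says exactly that for every connected component
`C` of `⟨Y⟩` and every connected component `D` of `X` the map `π₁(C) → π₁(D)` is trivial. -/
def SComplex.Inessential (X : SComplex V) (Y : Set V) : Prop :=
  ∀ (x : V) (p : X.graph.Walk x x), (∀ v ∈ p.support, v ∈ Y) → X.NullHomotopic p

/-- `X` is combinatorially `n`-essential if its vertex set cannot be partitioned into
`n` or fewer inessential sets. -/
def SComplex.CombEssential (X : SComplex V) (n : ℕ) : Prop :=
  ¬ ∃ P : Fin n → Set V, (∀ v, ∃ i, v ∈ P i) ∧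
      (∀ i j, i ≠ j → Disjoint (P i) (P j)) ∧ ∀ i, X.Inessential (P i)

/-- The combinatorial metric ball `B(x,i)`: vertices at edge-distance at most `i` from `x`. -/
def SComplex.ball (X : SComplex V) (x : V) (i : ℕ) : Set V :=
  {y | ∃ p : X.graph.Walk x y, p.length ≤ i}

/-- `r` is the homotopy triviality radius of `X`: every ball of radius `r` is
inessential, and `r` is the largest integer with this property. -/
def SComplex.HomotopyTrivRadius (X : SComplex V) (r : ℕ) : Prop :=
  (∀ x, X.Inessential (X.ball x r)) ∧
    ∀ r' : ℕ, (∀ x, X.Inessential (X.ball x r')) → r' ≤ r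

namespace SComplex

open SimpleGraph Walk

variable {X : SComplex V}

namespace EdgeHomotopic

theorem append_right {u v w : V} {p q : X.graph.Walk u v} (h : X.EdgeHomotopic p q)
    (t : X.graph.Walk v w) : X.EdgeHomotopic (p.append t) (q.append t) := by
  induction h generalizing w with
  | refl p => exact .refl _
  | symm _ ih => exact (ih t).symm
  | trans _ _ ih₁ ih₂ => exact (ih₁ t).trans (ih₂ t)
  | cons h _ ih => exact .cons h (ih t)
  | backtrack h p => exact .backtrack h (p.append t)
  | triangle huv hvw huw hface p => exact .triangle huv hvw huw hface (p.append t)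

theorem append_left {u v w : V} (p : X.graph.Walk u v) {q q' : X.graph.Walk v w}
    (h : X.EdgeHomotopic q q') : X.EdgeHomotopic (p.append q) (p.append q') := by
  induction p with
  | nil => exact h
  | cons had _ ih => exact .cons had (ih h)

end EdgeHomotopic

theorem edgeHomotopic_append_reverse_nil {u v : V} (p : X.graph.Walk u v) :
    X.EdgeHomotopic (p.append p.reverse) nil := by
  induction p with
  | nil => exact .refl _
  | cons h p ih =>
    rw [reverse_cons, cons_append, append_assoc]
    exact (EdgeHomotopic.cons h (ih.append_right _)).trans (.backtrack h nil)

theorem edgeHomotopic_reverse_append_nil {u v : V} (p : X.graph.Walk u v) :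
    X.EdgeHomotopic (p.reverse.append p) nil := by
  simpa using edgeHomotopic_append_reverse_nil p.reverse

theorem EdgeHomotopic.of_append_reverse {u v : V} {p q : X.graph.Walk u v}
    (h : X.EdgeHomotopic (p.append q.reverse) nil) : X.EdgeHomotopic p q := by
  have hp : X.EdgeHomotopic p (p.append (q.reverse.append q)) := by
    simpa using (EdgeHomotopic.append_left p (edgeHomotopic_reverse_append_nil q)).symm
  rw [append_assoc] at hp
  simpa using hp.trans (h.append_right q)

theorem EdgeHomotopic.of_append_left {u v w : V} (p : X.graph.Walk u v)
    {q q' : X.graph.Walk v w} (h : X.EdgeHomotopic (p.append q) (p.append q')) :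
    X.EdgeHomotopic q q' := by
  have hcancel : ∀ r : X.graph.Walk v w, X.EdgeHomotopic (p.reverse.append (p.append r)) r := by
    intro r
    rw [append_assoc]
    simpa using (edgeHomotopic_reverse_append_nil p).append_right r
  exact (hcancel q).symm.trans ((append_left p.reverse h).trans (hcancel q'))

theorem nullHomotopic_of_length_lt_sys {x : V} (p : X.graph.Walk x x)
    (hp : (p.length : ℕ∞) < X.sys) : X.NullHomotopic p := by
  by_contra h
  exact hp.not_ge (sInf_le ⟨x, p, h, rfl⟩)

theorem edgeHomotopic_of_length_add_lt_sys {u v : V} (p q : X.graph.Walk u v)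
    (h : ((p.length + q.length : ℕ) : ℕ∞) < X.sys) : X.EdgeHomotopic p q :=
  .of_append_reverse <| nullHomotopic_of_length_lt_sys _ <| by
    rwa [length_append, length_reverse]

theorem edgeHomotopic_append_of_support_subset_ball {x : V} {r : ℕ}
    (hr : ((2 * r + 1 : ℕ) : ℕ∞) < X.sys) {a b : V} (q : X.graph.Walk a b)
    (hq : ∀ v ∈ q.support, v ∈ X.ball x r) (γa : X.graph.Walk x a) (γb : X.graph.Walk x b)
    (ha : γa.length ≤ r) (hb : γb.length ≤ r) : X.EdgeHomotopic (γa.append q) γb := by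
  have hlt : ∀ n ≤ 2 * r + 1, (n : ℕ∞) < X.sys := fun n hn =>
    lt_of_le_of_lt (Nat.cast_le.2 hn) hr
  induction q with
  | nil =>
    rw [append_nil]
    exact edgeHomotopic_of_length_add_lt_sys γa γb (hlt _ (by omega))
  | @cons _ c _ h q ih =>
    obtain ⟨γc, hc⟩ := hq c (by simp)
    have hstep : X.EdgeHomotopic (γa.append (cons h nil)) γc :=
      edgeHomotopic_of_length_add_lt_sys _ _ <| hlt _ <| by
        simp only [length_append, length_cons, length_nil]; omega
    rw [← cons_nil_append, append_assoc]
    exact (hstep.append_right q).trans (ih (fun v hv => hq v (by simp [hv])) γc γb hc hb)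

theorem inessential_ball_of_lt_sys {r : ℕ} (hr : ((2 * r + 1 : ℕ) : ℕ∞) < X.sys) (x : V) :
    X.Inessential (X.ball x r) := by
  intro y p hp
  obtain ⟨γ, hγ⟩ := hp y p.start_mem_support
  refine EdgeHomotopic.of_append_left γ ?_
  rw [append_nil]
  exact edgeHomotopic_append_of_support_subset_ball hr p hp γ γ hγ hγ

theorem exists_not_nullHomotopic_length_eq_sys {s : ℕ} (hs : X.sys = s) :
    ∃ (x : V) (p : X.graph.Walk x x), ¬ X.NullHomotopic p ∧ p.length = s := by
  have hne : {n : ℕ∞ | ∃ (x : V) (p : X.graph.Walk x x),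
      ¬ X.NullHomotopic p ∧ (p.length : ℕ∞) = n}.Nonempty := by
    refine Set.nonempty_iff_ne_empty.2 fun h => ?_
    rw [sys, h, sInf_empty] at hs
    exact ENat.top_ne_natCast s hs
  obtain ⟨x, p, hp, hlen⟩ := csInf_mem hne
  exact ⟨x, p, hp, by exact_mod_cast hlen.trans hs⟩

theorem mem_ball_of_mem_support {x v : V} {r : ℕ} {p : X.graph.Walk x x}
    (hp : p.length ≤ 2 * r + 1) (hv : v ∈ p.support) : v ∈ X.ball x r := by
  obtain ⟨q, t, rfl⟩ := mem_support_iff_exists_append.mp hv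
  rw [length_append] at hp
  by_cases hq : q.length ≤ r
  · exact ⟨q, hq⟩
  · exact ⟨t.reverse, by rw [length_reverse]; omega⟩

theorem lt_sys_of_forall_inessential_ball {r : ℕ} (h : ∀ x, X.Inessential (X.ball x r)) :
    ((2 * r + 1 : ℕ) : ℕ∞) < X.sys := by
  by_contra! hle
  obtain ⟨s, hs⟩ := ENat.ne_top_iff_exists.mp (hle.trans_lt (ENat.natCast_lt_top _)).ne
  obtain ⟨x, p, hp, hlen⟩ := exists_not_nullHomotopic_length_eq_sys hs.symm
  have hlen' : p.length ≤ 2 * r + 1 := by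
    rw [hlen]; exact_mod_cast hs ▸ hle
  exact hp (h x x p fun v hv => mem_ball_of_mem_support hlen' hv)

theorem forall_inessential_ball_iff_lt_sys {r : ℕ} :
    (∀ x, X.Inessential (X.ball x r)) ↔ ((2 * r + 1 : ℕ) : ℕ∞) < X.sys :=
  ⟨lt_sys_of_forall_inessential_ball, inessential_ball_of_lt_sys⟩

theorem two_le_sys : 2 ≤ X.sys := le_sInf <| by
  rintro _ ⟨x, p, hp, rfl⟩
  cases p with
  | nil => exact absurd (.refl _) hp
  | cons h q =>
    cases q with
    | nil => exact absurd h (X.graph.loopless.irrefl _)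
    | cons _ _ => simp only [length_cons]; norm_cast; omega

end SComplex

theorem homotopyTrivRadius_eq_sys_div_two_sub_one_general {V : Type} [DecidableEq V]
    (X : SComplex V) (s : ℕ) (hs : X.sys = (s : ℕ∞)) :
    X.HomotopyTrivRadius (s / 2 - 1) := by
  have hs2 : 2 ≤ s := by exact_mod_cast hs ▸ X.two_le_sys
  refine ⟨SComplex.forall_inessential_ball_iff_lt_sys.2 ?_, fun r' hr' => ?_⟩
  · rw [hs]
    exact_mod_cast (by omega : 2 * (s / 2 - 1) + 1 < s)
  · have hr's : ((2 * r' + 1 : ℕ) : ℕ∞) < s :=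
      hs ▸ SComplex.forall_inessential_ball_iff_lt_sys.1 hr'
    have hr's' : 2 * r' + 1 < s := by exact_mod_cast hr's
    omega

/-- **Proposition (systole vs. homotopy triviality radius).**
If `X` has finite systole `s = sys X`, then with `r := ⌊s / 2⌋ - 1` every metric ball
`B(x, r)` is inessential and `r` is the maximum integer with this property; i.e. the
homotopy triviality radius of `X` equals `⌊sys X / 2⌋ - 1`. -/
theorem homotopyTrivRadius_eq_sys_div_two_sub_one {V : Type} [Fintype V] [DecidableEq V]
    (X : SComplex V) (s : ℕ) (hs : X.sys = (s : ℕ∞)) :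
    X.HomotopyTrivRadius (s / 2 - 1) :=
  homotopyTrivRadius_eq_sys_div_two_sub_one_general X s hs
end

section
/- Fix integers n ≥ 1 and r ≥ 0, and define positive integers b_n(i) for 0 ≤ i ≤ r+1 by the recursion: b_1(i) = 2i+1 for i = 0, …, r, b_1(r+1) = 2r+2, and b_n(i) = Σ_{j=0}^{i} b_{n−1}(j) for i = 0, …, r+1. Then for every n ≥ 1: b_n(i) ≥ 2·binom(i+n−1, n) + binom(i+n−1, n−1) for all i = 0, …, r, and b_n(r+1) ≥ 2·binom(r+n, n) + binom(r+n, n−1) − 1. -/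
/-- The recursively defined bounds `b_n(i)` (depending on the radius parameter `r`):
`b_1(i) = 2 i + 1` for `i = 0, …, r`, `b_1(r+1) = 2 r + 2`, and
`b_n(i) = ∑_{j ≤ i} b_{n-1}(j)`.  (The value for `n = 0` is irrelevant.) -/
def bfun (r : ℕ) : ℕ → ℕ → ℕ
  | 0, _ => 1
  | 1, i => if i = r + 1 then 2 * r + 2 else 2 * i + 1
  | n + 2, i => ∑ j ∈ Finset.range (i + 1), bfun r (n + 1) j

lemma sum_choose_shift (m k : ℕ) (hmk : m ≤ k) (i : ℕ) :
    ∑ j ∈ Finset.range (i + 1), (j + m).choose k = (i + m + 1).choose (k + 1) := by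
  induction i with
  | zero =>
      simp [Nat.choose_succ_succ, Nat.choose_eq_zero_of_lt (Nat.lt_succ_of_le hmk)]
  | succ i ih =>
      rw [Finset.sum_range_succ, ih]
      have h1 : i + 1 + m = i + m + 1 := by ring
      have h2 : (i + m + 1 + 1).choose (k + 1) =
          (i + m + 1).choose k + (i + m + 1).choose (k + 1) :=
        Nat.choose_succ_succ _ _
      rw [h1]
      omega

/-- **Lemma (closed form estimates for the recursion `b_n(i)`).**
For all `n ≥ 1`: `b_n(i) ≥ 2 C(i+n-1, n) + C(i+n-1, n-1)` for every `i = 0, …, r`,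
and `b_n(r+1) ≥ 2 C(r+n, n) + C(r+n, n-1) - 1`. -/
theorem bfun_lower_bounds (r n : ℕ) (hn : 1 ≤ n) :
    (∀ i ≤ r, 2 * Nat.choose (i + n - 1) n + Nat.choose (i + n - 1) (n - 1) ≤ bfun r n i) ∧
    2 * Nat.choose (r + n) n + Nat.choose (r + n) (n - 1) - 1 ≤ bfun r n (r + 1) := by
  induction n, hn using Nat.le_induction with
  | base =>
      constructor
      · intro i hi
        have hne : i ≠ r + 1 := by omega
        simp [bfun, hne, Nat.choose_one_right]
      · simp [bfun, Nat.choose_one_right]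
        omega
  | succ n hn ih =>
      obtain ⟨m, rfl⟩ : ∃ m, n = m + 1 := ⟨n - 1, by omega⟩
      obtain ⟨H1, H2⟩ := ih
      have hb : ∀ i, bfun r (m + 2) i = ∑ j ∈ Finset.range (i + 1), bfun r (m + 1) j :=
        fun i => rfl
      have sum_lb : ∀ i ≤ r,
          2 * (i + m + 1).choose (m + 2) + (i + m + 1).choose (m + 1) ≤
            ∑ j ∈ Finset.range (i + 1), bfun r (m + 1) j := by
        intro i hi
        calc 2 * (i + m + 1).choose (m + 2) + (i + m + 1).choose (m + 1)
            = ∑ j ∈ Finset.range (i + 1), (2 * (j + m).choose (m + 1) + (j + m).choose m) := by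
              rw [Finset.sum_add_distrib, ← Finset.mul_sum,
                sum_choose_shift m (m + 1) (by omega) i, sum_choose_shift m m le_rfl i]
          _ ≤ ∑ j ∈ Finset.range (i + 1), bfun r (m + 1) j := by
              apply Finset.sum_le_sum
              intro j hj
              have hj' : j ≤ r := by
                have := Finset.mem_range.mp hj; omega
              have h := H1 j hj'
              have e1 : j + (m + 1) - 1 = j + m := by omega
              have e2 : m + 1 - 1 = m := by omega
              rwa [e1, e2] at h
      constructor
      · intro i hi
        have h := sum_lb i hi
        rw [hb]
        have e1 : i + (m + 2) - 1 = i + m + 1 := by omega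
        have e2 : m + 2 - 1 = m + 1 := by omega
        rw [e1, e2]
        exact h
      · show 2 * (r + m + 2).choose (m + 2) + (r + m + 2).choose (m + 1) - 1 ≤
            bfun r (m + 2) (r + 1)
        rw [hb, Finset.sum_range_succ]
        have h1 := sum_lb r le_rfl
        have h2 := H2
        have e1 : r + (m + 1) = r + m + 1 := by omega
        have e2 : m + 1 - 1 = m := by omega
        rw [e1, e2] at h2
        have p1 : (r + m + 2).choose (m + 2) =
            (r + m + 1).choose (m + 1) + (r + m + 1).choose (m + 2) :=
          Nat.choose_succ_succ _ _
        have p2 : (r + m + 2).choose (m + 1) =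
            (r + m + 1).choose m + (r + m + 1).choose (m + 1) :=
          Nat.choose_succ_succ _ _
        have hpos : 0 < (r + m + 1).choose (m + 1) := Nat.choose_pos (by omega)
        omega
end

section
/- Let X be a simplicial complex with vertex set decomposed as a disjoint union V(X) = Y ⊔ Z. Suppose there are two cohomology classes ξ₁ and ξ₂ on X (with coefficients in a ring) such that ξ₁⌣ξ₂ ≠ 0, and that ξ₁ restricted to the induced subcomplex ⟨Y⟩ is trivial. Then ξ₂ restricted to the induced subcomplex ⟨Z⟩ is not trivial. -/
variable {V : Type} [DecidableEq V]

section Cochains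

variable {R : Type} [CommRing R]

/-- An ordered simplex of `X`: a tuple of vertices spanning a face of `X`
(repetitions allowed, as in the ordered simplicial cochain complex, which computes the
cohomology of `X`). -/
def SComplex.IsOSimplex (X : SComplex V) {k : ℕ} (f : Fin k → V) : Prop :=
  Finset.image f Finset.univ ∈ X.faces

/-- The simplicial coboundary of a `k`-cochain, a `(k+1)`-cochain:
`(δc)(v₀,…,v_{k+1}) = ∑ⱼ (-1)ʲ c(v₀,…,v̂ⱼ,…,v_{k+1})`. -/
def cobdry {k : ℕ} (c : (Fin (k + 1) → V) → R) (f : Fin (k + 2) → V) : R :=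
  ∑ j : Fin (k + 2), (-1 : R) ^ (j : ℕ) * c fun i => f (j.succAbove i)

/-- `c` is a simplicial `k`-cocycle of `X`: its coboundary vanishes on all ordered
`(k+1)`-simplices of `X`. -/
def SComplex.IsCocycle (X : SComplex V) {k : ℕ} (c : (Fin (k + 1) → V) → R) : Prop :=
  ∀ f : Fin (k + 2) → V, X.IsOSimplex f → cobdry c f = 0

/-- The cohomology class of the `(k+1)`-cocycle `c` restricts trivially to the
subcomplex induced by the vertex set `S`: on ordered simplices with vertices in `S` it
agrees with the coboundary of a `k`-cochain. -/
def SComplex.TrivialOn (X : SComplex V) {k : ℕ} (c : (Fin (k + 2) → V) → R)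
    (S : Set V) : Prop :=
  ∃ b : (Fin (k + 1) → V) → R, ∀ f : Fin (k + 2) → V, X.IsOSimplex f →
    (∀ i, f i ∈ S) → c f = cobdry b f

/-- The Alexander–Whitney cup product of a `(p+1)`-cochain and a `(q+1)`-cochain: a
`(p+q+2)`-cochain given by `(c ⌣ d)(v₀,…,v_{p+q+2}) =
c(v₀,…,v_{p+1}) · d(v_{p+1},…,v_{p+q+2})`. -/
def cup {p q : ℕ} (c : (Fin (p + 2) → V) → R) (d : (Fin (q + 2) → V) → R)
    (f : Fin (p + q + 3) → V) : R :=
  c (fun i => f (Fin.castLE (by omega) i)) * d fun i => f ⟨p + 1 + (i : ℕ), by omega⟩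

end Cochains

/-!
Write `c = χ + δe` and `d = ψ + δe'` with `χ` vanishing on `⟨Y⟩` and `ψ` vanishing on `⟨Z⟩`.
By the Leibniz rule `c ⌣ d` is cohomologous to `χ ⌣ ψ`, so it suffices to show that `χ ⌣ ψ` is
a coboundary. Pull it back to the barycentric subdivision along a simplicial approximation `φ`
of the identity that sends the barycentre of a face meeting `Y` to a vertex in `Y`. On a flag
`σ₀ ⊇ ⋯ ⊇ σₙ` with pivot `σₘ` (the vertex shared by the front and back faces), either the pivot
meets `Y`, and then so do the larger faces, so the front face lands in `⟨Y⟩`; or the pivot lies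
in `Z`, and then so do the smaller faces, so the back face lands in `⟨Z⟩`. This is the
combinatorial form of `U(Y) ∪ U(Z) = X`. Hence `φ^*(χ ⌣ ψ)` vanishes on the subdivision, and
the cone construction gives a cochain homotopy between the identity and `Sd^* ∘ φ^*`.
-/

namespace List

variable {α : Type*}

theorem toFinset_mono [DecidableEq α] {l l' : List α} (h : l ⊆ l') :
    l.toFinset ⊆ l'.toFinset :=
  fun _ hx => mem_toFinset.mpr (h (mem_toFinset.mp hx))

theorem ofFn_succAbove {n : ℕ} (f : Fin (n + 1) → α) (j : Fin (n + 1)) :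
    ofFn (fun i => f (j.succAbove i)) = (ofFn f).eraseIdx j :=
  ext_getElem (by grind) fun i _ _ => by
    simp only [List.getElem_ofFn, List.getElem_eraseIdx, Fin.succAbove, Fin.lt_def]
    split_ifs <;> simp_all

end List

theorem SComplex.toFinset_mem_faces_of_subset {X : SComplex V} {l l' : List V}
    (hl : l.toFinset ∈ X.faces) (hne : l' ≠ []) (h : l'.toFinset ⊆ l.toFinset) :
    l'.toFinset ∈ X.faces :=
  X.down_closed _ hl _ h (List.toFinset_nonempty_iff l' |>.mpr hne)

theorem SComplex.toFinset_take_mem_faces {X : SComplex V} {l : List V}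
    (hl : l.toFinset ∈ X.faces) {k : ℕ} (hk : 0 < k) : (l.take k).toFinset ∈ X.faces := by
  have hne : l ≠ [] := (List.toFinset_nonempty_iff l).mp (X.nonempty_of_mem _ hl)
  exact X.toFinset_mem_faces_of_subset hl (by simp [hne]; omega)
    (List.toFinset_mono (List.take_subset _ _))

theorem SComplex.toFinset_drop_mem_faces {X : SComplex V} {l : List V}
    (hl : l.toFinset ∈ X.faces) {k : ℕ} (hk : k < l.length) : (l.drop k).toFinset ∈ X.faces :=
  X.toFinset_mem_faces_of_subset hl (List.ne_nil_of_length_pos (by simp; omega))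
    (List.toFinset_mono (List.drop_subset _ _))

namespace ListCochain

open Finset

section Algebra

variable {α β R : Type*} [CommRing R]

/-! Cochains of all degrees at once: a `k`-cochain is a function on lists of length `k + 1`,
the ordered `k`-simplices being the lists whose vertices span a face. -/

def coboundary : (List α → R) →ₗ[R] List α → R where
  toFun C l := ∑ i ∈ range l.length, (-1) ^ i * C (l.eraseIdx i)
  map_add' _ _ := by ext; simp [mul_add, sum_add_distrib]
  map_smul' _ _ := by ext; simp [mul_sum, mul_left_comm]

theorem coboundary_apply (C : List α → R) (l : List α) :
    coboundary C l = ∑ i ∈ range l.length, (-1) ^ i * C (l.eraseIdx i) := rfl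

@[simp]
theorem coboundary_nil (C : List α → R) : coboundary C [] = 0 := by
  simp [coboundary_apply]

theorem coboundary_congr {C D : List α → R} {l : List α}
    (h : ∀ i < l.length, C (l.eraseIdx i) = D (l.eraseIdx i)) :
    coboundary C l = coboundary D l := by
  simp only [coboundary_apply]
  exact sum_congr rfl fun i hi => by rw [h i (mem_range.mp hi)]

theorem coboundary_eq_zero {C : List α → R} {l : List α}
    (h : ∀ i < l.length, C (l.eraseIdx i) = 0) : coboundary C l = 0 := by
  simpa using coboundary_congr (D := 0) h

def cone (a : α) (C : List α → R) (l : List α) : R := C (a :: l)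

theorem cone_coboundary (a : α) (C : List α → R) :
    cone a (coboundary C) = C - coboundary (cone a C) := by
  ext l
  simp only [cone, coboundary_apply, List.length_cons, sum_range_succ', pow_succ,
    List.eraseIdx_cons_succ, List.eraseIdx_cons_zero, Pi.sub_apply]
  simp [mul_neg, sum_neg_distrib, sub_eq_neg_add]

theorem coboundary_cons (C : List α → R) (x : α) (l : List α) :
    coboundary C (x :: l) = C l - coboundary (cone x C) l :=
  congrFun (cone_coboundary x C) l

theorem coboundary_coboundary (C : List α → R) : coboundary (coboundary C) = 0 := by
  ext l
  induction l generalizing C with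
  | nil => exact coboundary_nil _
  | cons a l ih =>
    change cone a (coboundary (coboundary C)) l = 0
    rw [cone_coboundary, cone_coboundary, map_sub, sub_sub_cancel]
    exact ih _

theorem coboundary_comp_map (φ : β → α) (C : List α → R) :
    coboundary (C ∘ List.map φ) = coboundary C ∘ List.map φ := by
  ext l
  simp [coboundary_apply, List.eraseIdx_map]

def IsHomogeneous (k : ℕ) (C : List α → R) : Prop :=
  ∀ l : List α, l.length ≠ k → C l = 0

theorem IsHomogeneous.sub {k : ℕ} {C D : List α → R} (hC : IsHomogeneous k C)
    (hD : IsHomogeneous k D) : IsHomogeneous k (C - D) :=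
  fun l hl => by simp [hC l hl, hD l hl]

theorem IsHomogeneous.coboundary {k : ℕ} {C : List α → R} (hC : IsHomogeneous k C) :
    IsHomogeneous (k + 1) (coboundary C) :=
  fun l hl => coboundary_eq_zero fun i hi => hC _ (by grind)

def cupAt (m : ℕ) (a b : List α → R) (l : List α) : R :=
  a (l.take (m + 1)) * b (l.drop m)

theorem cupAt_succ_cons (m : ℕ) (a b : List α → R) (x : α) (l : List α) :
    cupAt (m + 1) a b (x :: l) = cupAt m (cone x a) b l := rfl

theorem coboundary_cupAt (a b : List α → R) (m : ℕ) {l : List α} (hl : m + 2 ≤ l.length) :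
    coboundary (cupAt m a b) l =
      cupAt (m + 1) (coboundary a) b l + (-1) ^ m * cupAt m a (coboundary b) l := by
  induction m generalizing a l with
  | zero =>
    obtain ⟨x, y, l, rfl⟩ : ∃ x y l', l = x :: y :: l' := by
      match l, hl with
      | x :: y :: l', _ => exact ⟨x, y, l', rfl⟩
    have hcone : cone x (cupAt 0 a b) = a [x] • cone x b := rfl
    have hδa : coboundary (cone x a) [y] = a [x] := by simp [coboundary_apply, cone]
    rw [coboundary_cons, hcone, map_smul, cupAt_succ_cons, cone_coboundary]
    simp only [cupAt, coboundary_cons b x, Pi.sub_apply, Pi.smul_apply, smul_eq_mul, List.take,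
      List.drop, hδa]
    ring
  | succ m ih =>
    obtain ⟨x, l, rfl⟩ : ∃ x l', l = x :: l' := by
      match l, hl with
      | x :: l', _ => exact ⟨x, l', rfl⟩
    have hcone : cone x (cupAt (m + 1) a b) = cupAt m (cone x a) b := rfl
    rw [coboundary_cons, hcone, ih _ (by simp at hl; omega), cupAt_succ_cons, cupAt_succ_cons,
      cone_coboundary]
    simp only [cupAt, Pi.sub_apply, pow_succ]
    ring

/-- The ordered simplices of the barycentric subdivision of `s`, largest face first. -/
def IsFlagIn (s : Finset α) (g : List (Finset α)) : Prop :=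
  g.IsChain (· ⊇ ·) ∧ ∀ t ∈ g, t.Nonempty ∧ t ⊆ s

theorem IsFlagIn.getElem_subset {s : Finset α} {g : List (Finset α)} (hg : IsFlagIn s g)
    {i j : ℕ} (hij : i ≤ j) (hj : j < g.length) : g[j] ⊆ g[i] := by
  rcases hij.eq_or_lt with rfl | hlt
  · exact subset_rfl
  · exact List.pairwise_iff_getElem.mp (List.isChain_iff_pairwise.mp hg.1) i j _ _ hlt

theorem exists_choice_preferring (Y : Set α) [Nonempty α] :
    ∃ φ : Finset α → α, (∀ s : Finset α, s.Nonempty → φ s ∈ s) ∧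
      ∀ s : Finset α, (∃ y ∈ s, y ∈ Y) → φ s ∈ Y := by
  have h : ∀ s : Finset α, ∃ v, (s.Nonempty → v ∈ s) ∧ ((∃ y ∈ s, y ∈ Y) → v ∈ Y) := by
    intro s
    by_cases hY : ∃ y ∈ s, y ∈ Y
    · obtain ⟨y, hy, hyY⟩ := hY
      exact ⟨y, fun _ => hy, fun _ => hyY⟩
    · rcases s.eq_empty_or_nonempty with rfl | ⟨v, hv⟩
      · exact ⟨Classical.arbitrary α, by simp, by simp⟩
      · exact ⟨v, fun _ => hv, fun h => absurd h hY⟩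
  choose φ hφ using h
  exact ⟨φ, fun s => (hφ s).1, fun s => (hφ s).2⟩

variable [DecidableEq α]

/-- The dual of the barycentric subdivision `Sd σ = σ̂ * Sd (∂σ)`. -/
def subdivision (C : List (Finset α) → R) : List α → R
  | [] => C []
  | a :: t => ∑ i : Fin (t.length + 1),
      (-1) ^ (i : ℕ) * subdivision (cone (a :: t).toFinset C) ((a :: t).eraseIdx i)
termination_by l => l.length
decreasing_by grind

theorem subdivision_nil (C : List (Finset α) → R) : subdivision C [] = C [] := by
  rw [subdivision]

theorem subdivision_cons (C : List (Finset α) → R) (a : α) (t : List α) :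
    subdivision C (a :: t) =
      coboundary (subdivision (cone (a :: t).toFinset C)) (a :: t) := by
  rw [subdivision, coboundary_apply, List.length_cons, ← Fin.sum_univ_eq_sum_range]

/-- A cochain homotopy between the identity and `Sd^* ∘ φ^*` (see `coneHomotopy_coboundary`),
built by coning from the first vertex. -/
def coneHomotopy (φ : Finset α → α) (C : List α → R) : List α → R
  | [] => 0
  | a :: t => C (a :: a :: t) - subdivision (cone a C ∘ List.map φ) (a :: t)
      - ∑ i : Fin (t.length + 1), (-1) ^ (i : ℕ) * coneHomotopy φ (cone a C) ((a :: t).eraseIdx i)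
termination_by l => l.length
decreasing_by grind

theorem coneHomotopy_nil (φ : Finset α → α) (C : List α → R) : coneHomotopy φ C [] = 0 := by
  rw [coneHomotopy]

theorem coneHomotopy_cons (φ : Finset α → α) (C : List α → R) (a : α) (t : List α) :
    coneHomotopy φ C (a :: t) = cone a C (a :: t) - subdivision (cone a C ∘ List.map φ) (a :: t)
      - coboundary (coneHomotopy φ (cone a C)) (a :: t) := by
  rw [coneHomotopy, coboundary_apply, List.length_cons, ← Fin.sum_univ_eq_sum_range]
  rfl

theorem subdivision_sub (C D : List (Finset α) → R) :
    subdivision (C - D) = subdivision C - subdivision D := by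
  ext l
  induction hn : l.length using Nat.strong_induction_on generalizing l C D with
  | _ n ih =>
    cases l with
    | nil => simp [subdivision_nil]
    | cons a t =>
      rw [Pi.sub_apply, subdivision_cons, subdivision_cons, subdivision_cons, ← Pi.sub_apply,
        ← map_sub]
      exact coboundary_congr fun i hi => ih _ (by grind) _ _ _ rfl

theorem coneHomotopy_sub (φ : Finset α → α) (C D : List α → R) :
    coneHomotopy φ (C - D) = coneHomotopy φ C - coneHomotopy φ D := by
  ext l
  induction hn : l.length using Nat.strong_induction_on generalizing l C D with
  | _ n ih =>
    cases l with
    | nil => simp [coneHomotopy_nil]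
    | cons a t =>
      have hrec : coboundary (coneHomotopy φ (cone a (C - D))) (a :: t) =
          coboundary (coneHomotopy φ (cone a C) - coneHomotopy φ (cone a D)) (a :: t) :=
        coboundary_congr fun i hi => ih _ (by grind) _ _ _ rfl
      rw [Pi.sub_apply, coneHomotopy_cons, coneHomotopy_cons, coneHomotopy_cons, hrec, map_sub,
        show cone a (C - D) ∘ List.map φ = cone a C ∘ List.map φ - cone a D ∘ List.map φ from rfl,
        subdivision_sub]
      simp only [Pi.sub_apply, cone]
      ring

theorem subdivision_coboundary (C : List (Finset α) → R) :
    subdivision (coboundary C) = coboundary (subdivision C) := by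
  ext l
  induction hn : l.length using Nat.strong_induction_on generalizing l C with
  | _ n ih =>
    cases l with
    | nil => simp [subdivision_nil]
    | cons a t =>
      set K := cone (a :: t).toFinset C
      have hrec : coboundary (subdivision (coboundary K)) (a :: t) =
          coboundary (coboundary (subdivision K)) (a :: t) :=
        coboundary_congr fun i hi => ih _ (by grind) _ _ rfl
      rw [subdivision_cons, cone_coboundary, subdivision_sub, map_sub, Pi.sub_apply, hrec,
        coboundary_coboundary, Pi.zero_apply, sub_zero]

theorem coneHomotopy_coboundary (φ : Finset α → α) (C : List α → R) :
    coneHomotopy φ (coboundary C) =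
      C - subdivision (C ∘ List.map φ) - coboundary (coneHomotopy φ C) := by
  ext l
  induction hn : l.length using Nat.strong_induction_on generalizing l C with
  | _ n ih =>
    cases l with
    | nil => simp [coneHomotopy_nil, subdivision_nil]
    | cons a t =>
      set K := cone a C
      have hrec : coboundary (coneHomotopy φ (coboundary K)) (a :: t) =
          coboundary (K - subdivision (K ∘ List.map φ) - coboundary (coneHomotopy φ K)) (a :: t) :=
        coboundary_congr fun i hi => ih _ (by grind) _ _ rfl
      have hsd : (C - coboundary K) ∘ List.map φ =
          C ∘ List.map φ - coboundary (K ∘ List.map φ) := by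
        rw [coboundary_comp_map]; rfl
      rw [coneHomotopy_cons, cone_coboundary, coneHomotopy_sub, map_sub,
        Pi.sub_apply (coboundary _), hrec, hsd, subdivision_sub, subdivision_coboundary]
      simp only [map_sub, coboundary_coboundary, Pi.sub_apply, Pi.zero_apply]
      ring

theorem subdivision_eq_zero {C : List (Finset α) → R} {l : List α}
    (h : ∀ g, g.length = l.length → IsFlagIn l.toFinset g → C g = 0) :
    subdivision C l = 0 := by
  induction hn : l.length using Nat.strong_induction_on generalizing l C with
  | _ n ih =>
    cases l with
    | nil => exact subdivision_nil C ▸ h [] rfl ⟨List.isChain_nil, by simp⟩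
    | cons a t =>
      rw [subdivision_cons]
      refine coboundary_eq_zero fun i hi => ih _ (by grind) (fun g hg ⟨hchain, hsub⟩ => ?_) rfl
      have hsub' : ∀ s ∈ g, s.Nonempty ∧ s ⊆ (a :: t).toFinset := fun s hs =>
        ⟨(hsub s hs).1, (hsub s hs).2.trans (List.toFinset_mono List.eraseIdx_subset)⟩
      refine h _ (by grind) ⟨List.isChain_cons.mpr ⟨fun s hs => ?_, hchain⟩, ?_⟩
      · exact (hsub' s (List.mem_of_mem_head? hs)).2
      · simp only [List.mem_cons, forall_eq_or_imp]
        exact ⟨⟨⟨a, by simp⟩, subset_rfl⟩, hsub'⟩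

theorem coneHomotopy_eq_zero {φ : Finset α → α} (hφ : ∀ s : Finset α, s.Nonempty → φ s ∈ s)
    {C : List α → R} {l : List α}
    (h : ∀ l' : List α, l' ≠ [] → l'.toFinset ⊆ l.toFinset → C l' = 0) :
    coneHomotopy φ C l = 0 := by
  induction hn : l.length using Nat.strong_induction_on generalizing l C with
  | _ n ih =>
    cases l with
    | nil => exact coneHomotopy_nil φ C
    | cons a t =>
      have hcone : ∀ l', l'.toFinset ⊆ (a :: t).toFinset → cone a C l' = 0 := fun l' hl' =>
        h _ (List.cons_ne_nil _ _) (by simpa [Finset.insert_subset_iff] using hl')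
      have hsd : subdivision (cone a C ∘ List.map φ) (a :: t) = 0 :=
        subdivision_eq_zero fun g _ ⟨_, hsub⟩ => hcone _ fun v hv => by
          obtain ⟨s, hs, rfl⟩ := List.mem_map.mp (List.mem_toFinset.mp hv)
          exact (hsub s hs).2 (hφ s (hsub s hs).1)
      have hrec : coboundary (coneHomotopy φ (cone a C)) (a :: t) = 0 :=
        coboundary_eq_zero fun i hi => ih _ (by grind) (fun l' _ hl' => hcone _
          (hl'.trans (List.toFinset_mono List.eraseIdx_subset))) rfl
      rw [coneHomotopy_cons, hcone _ subset_rfl, hsd, hrec, sub_zero, sub_zero]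

theorem eq_coboundary_coneHomotopy {φ : Finset α → α} (hφ : ∀ s : Finset α, s.Nonempty → φ s ∈ s)
    {C : List α → R} {l : List α}
    (hC : ∀ l' : List α, l' ≠ [] → l'.toFinset ⊆ l.toFinset → coboundary C l' = 0)
    (hflag : ∀ g, g.length = l.length → IsFlagIn l.toFinset g → C (g.map φ) = 0) :
    C l = coboundary (coneHomotopy φ C) l := by
  have h := congrFun (coneHomotopy_coboundary φ C) l
  rw [coneHomotopy_eq_zero hφ hC, Pi.sub_apply, Pi.sub_apply,
    subdivision_eq_zero (C := C ∘ List.map φ) hflag] at h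
  linear_combination -h

end Algebra

section Complex

variable {R : Type*} [CommRing R]

def IsCocycleOn (X : SComplex V) (C : List V → R) : Prop :=
  ∀ l : List V, l.toFinset ∈ X.faces → coboundary C l = 0

def VanishesOn (X : SComplex V) (C : List V → R) (S : Set V) : Prop :=
  ∀ l : List V, l.toFinset ∈ X.faces → (∀ v ∈ l, v ∈ S) → C l = 0

theorem IsCocycleOn.sub_coboundary {X : SComplex V} {C : List V → R} (hC : IsCocycleOn X C)
    (E : List V → R) : IsCocycleOn X (C - coboundary E) :=
  fun l hl => by
    rw [map_sub, Pi.sub_apply, hC l hl, coboundary_coboundary, Pi.zero_apply, sub_zero]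

theorem IsCocycleOn.cupAt {X : SComplex V} {a b : List V → R} (ha : IsCocycleOn X a)
    (hb : IsCocycleOn X b) {m : ℕ} (ha_hom : IsHomogeneous (m + 1) a) :
    IsCocycleOn X (cupAt m a b) := by
  intro l hl
  by_cases hlen : m + 2 ≤ l.length
  · rw [coboundary_cupAt a b m hlen, ListCochain.cupAt, ListCochain.cupAt,
      ha _ (X.toFinset_take_mem_faces hl (by omega)),
      hb _ (X.toFinset_drop_mem_faces hl (by omega))]
    ring
  · exact coboundary_eq_zero fun i hi => by
      rw [ListCochain.cupAt, ha_hom _ (by grind), zero_mul]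

theorem cupAt_coboundary_left {X : SComplex V} {b : List V → R} (hb : IsCocycleOn X b)
    (e : List V → R) {m : ℕ} {l : List V} (hl : l.toFinset ∈ X.faces) (hlen : m + 2 ≤ l.length) :
    cupAt (m + 1) (coboundary e) b l = coboundary (cupAt m e b) l := by
  rw [coboundary_cupAt e b m hlen]
  simp only [cupAt]
  rw [hb _ (X.toFinset_drop_mem_faces hl (by omega))]
  ring

theorem cupAt_coboundary_right {X : SComplex V} {a : List V → R} (ha : IsCocycleOn X a)
    (e : List V → R) {m : ℕ} {l : List V} (hl : l.toFinset ∈ X.faces) (hlen : m + 2 ≤ l.length) :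
    cupAt m a (coboundary e) l = (-1) ^ m * coboundary (cupAt m a e) l := by
  rw [coboundary_cupAt a e m hlen]
  simp only [cupAt]
  rw [ha _ (X.toFinset_take_mem_faces hl (by omega)),
    zero_mul, zero_add, ← mul_assoc, ← pow_add, Even.neg_one_pow ⟨m, rfl⟩, one_mul]

theorem cupAt_map_eq_zero {X : SComplex V} {Y Z : Set V} (hYZ : Y ∪ Z = Set.univ)
    {φ : Finset V → V} (hφ : ∀ s : Finset V, s.Nonempty → φ s ∈ s)
    (hφY : ∀ s : Finset V, (∃ y ∈ s, y ∈ Y) → φ s ∈ Y)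
    {a b : List V → R} (ha : VanishesOn X a Y) (hb : VanishesOn X b Z)
    {s : Finset V} (hs : s ∈ X.faces) {g : List (Finset V)} (hg : IsFlagIn s g)
    {m : ℕ} (hm : m < g.length) : cupAt m a b (g.map φ) = 0 := by
  have hface : ∀ g' ⊆ g, 0 < g'.length → (g'.map φ).toFinset ∈ X.faces :=
    fun g' hsub hpos => X.down_closed _ hs _ (fun v hv => by
        obtain ⟨t, ht, rfl⟩ := List.mem_map.mp (List.mem_toFinset.mp hv)
        exact (hg.2 t (hsub ht)).2 (hφ t (hg.2 t (hsub ht)).1))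
      (by simpa using List.ne_nil_of_length_pos hpos)
  by_cases hpivot : ∃ y ∈ g[m], y ∈ Y
  · rw [cupAt, ← List.map_take, ha _ (hface _ (List.take_subset _ _) (by simp; omega)),
      zero_mul]
    intro v hv
    obtain ⟨t, ht, rfl⟩ := List.mem_map.mp hv
    obtain ⟨i, hi, rfl⟩ := List.mem_take_iff_getElem.mp ht
    obtain ⟨y, hy, hyY⟩ := hpivot
    exact hφY _ ⟨y, hg.getElem_subset (by omega) hm hy, hyY⟩
  · rw [cupAt, ← List.map_drop, hb _ (hface _ (List.drop_subset _ _) (by simp; omega)),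
      mul_zero]
    intro v hv
    obtain ⟨t, ht, rfl⟩ := List.mem_map.mp hv
    obtain ⟨j, hj, rfl⟩ := List.mem_drop_iff_getElem.mp ht
    have hmem := hg.getElem_subset (Nat.le_add_right m j) (by omega)
      (hφ _ (hg.2 _ (List.getElem_mem _)).1)
    have hcover : φ g[m + j] ∈ Y ∪ Z := hYZ ▸ Set.mem_univ _
    exact hcover.resolve_left fun hY => hpivot ⟨_, hmem, hY⟩

theorem exists_cupAt_eq_coboundary [Nonempty V] {X : SComplex V} {Y Z : Set V}
    (hYZ : Y ∪ Z = Set.univ) {a b : List V → R} {m : ℕ} (ha : IsCocycleOn X a)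
    (hb : IsCocycleOn X b) (ha_hom : IsHomogeneous (m + 1) a) (haY : VanishesOn X a Y)
    (hbZ : VanishesOn X b Z) :
    ∃ E : List V → R, ∀ l : List V, l.toFinset ∈ X.faces → m < l.length →
      cupAt m a b l = coboundary E l := by
  obtain ⟨φ, hφ, hφY⟩ := exists_choice_preferring Y
  refine ⟨coneHomotopy φ (cupAt m a b), fun l hl hlen => eq_coboundary_coneHomotopy hφ
    (fun l' hne hsub => ha.cupAt hb ha_hom l' (X.toFinset_mem_faces_of_subset hl hne hsub))
    (fun g hg hflag => cupAt_map_eq_zero hYZ hφ hφY haY hbZ hl hflag (by omega))⟩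

theorem exists_cupAt_eq_coboundary_of_cohomologous [Nonempty V] {X : SComplex V} {Y Z : Set V}
    (hYZ : Y ∪ Z = Set.univ) {u v eY eZ : List V → R} {m : ℕ} (hu : IsCocycleOn X u)
    (hv : IsCocycleOn X v) (hhom : IsHomogeneous (m + 2) (u - coboundary eY))
    (hY : VanishesOn X (u - coboundary eY) Y) (hZ : VanishesOn X (v - coboundary eZ) Z) :
    ∃ E : List V → R, ∀ l : List V, l.toFinset ∈ X.faces → m + 3 ≤ l.length →
      cupAt (m + 1) u v l = coboundary E l := by
  obtain ⟨E, hE⟩ := exists_cupAt_eq_coboundary hYZ (hu.sub_coboundary eY) (hv.sub_coboundary eZ)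
    hhom hY hZ
  refine ⟨cupAt m eY v + ((-1) ^ (m + 1) : R) • cupAt (m + 1) (u - coboundary eY) eZ + E,
    fun l hl hlen => ?_⟩
  have hsplit : cupAt (m + 1) u v l = cupAt (m + 1) (coboundary eY) v l +
      cupAt (m + 1) (u - coboundary eY) (coboundary eZ) l +
      cupAt (m + 1) (u - coboundary eY) (v - coboundary eZ) l := by
    simp only [cupAt, Pi.sub_apply]
    ring
  rw [hsplit, cupAt_coboundary_left hv eY hl (by omega),
    cupAt_coboundary_right (hu.sub_coboundary eY) eZ hl (by omega), hE l hl (by omega),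
    map_add, map_add, map_smul]
  simp only [Pi.add_apply, Pi.smul_apply, smul_eq_mul]

end Complex

section OfFin

variable {α R : Type*} [CommRing R]

def ofFin (k : ℕ) (c : (Fin k → α) → R) (l : List α) : R :=
  if h : l.length = k then c fun i => l.get (i.cast h.symm) else 0

theorem ofFin_ofFn {k : ℕ} (c : (Fin k → α) → R) (f : Fin k → α) :
    ofFin k c (List.ofFn f) = c f := by
  rw [ofFin, dif_pos (List.length_ofFn)]
  simp

theorem isHomogeneous_ofFin {k : ℕ} (c : (Fin k → α) → R) : IsHomogeneous k (ofFin k c) :=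
  fun _ hl => dif_neg hl

theorem ofFin_comp_ofFn (E : List α → R) {k : ℕ} {l : List α} (h : l.length = k) :
    ofFin k (fun f => E (List.ofFn f)) l = E l := by
  subst h
  simp [ofFin]

theorem IsHomogeneous.eq_zero_of_ofFn {k : ℕ} {C : List α → R} (hC : IsHomogeneous k C)
    {P : List α → Prop} (h : ∀ f : Fin k → α, P (List.ofFn f) → C (List.ofFn f) = 0)
    {l : List α} (hl : P l) : C l = 0 := by
  by_cases hlen : l.length = k
  · subst hlen
    rw [← List.ofFn_get l] at hl ⊢
    exact h _ hl
  · exact hC l hlen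

end OfFin

section FinCochains

variable {R : Type} [CommRing R]

theorem cobdry_eq_coboundary {α : Type} {k : ℕ} (b : (Fin (k + 1) → α) → R)
    (f : Fin (k + 2) → α) :
    cobdry b f = coboundary (ofFin (k + 1) b) (List.ofFn f) := by
  rw [cobdry, coboundary_apply, List.length_ofFn, ← Fin.sum_univ_eq_sum_range]
  congr! 2 with j
  rw [← List.ofFn_succAbove, ofFin_ofFn]

theorem cup_eq_cupAt {α : Type} {p q : ℕ} (c : (Fin (p + 2) → α) → R)
    (d : (Fin (q + 2) → α) → R) (f : Fin (p + q + 3) → α) :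
    cup c d f = cupAt (p + 1) (ofFin (p + 2) c) (ofFin (q + 2) d) (List.ofFn f) := by
  have htake : (List.ofFn f).take (p + 2) =
      List.ofFn fun i => f (Fin.castLE (by omega : p + 2 ≤ p + q + 3) i) :=
    List.ext_getElem (by simp; omega) fun i _ _ => by
      simp only [List.getElem_take, List.getElem_ofFn]; rfl
  have hdrop : (List.ofFn f).drop (p + 1) =
      List.ofFn fun i : Fin (q + 2) => f ⟨p + 1 + i, by omega⟩ :=
    List.ext_getElem (by simp; omega) fun i _ _ => by
      simp only [List.getElem_drop, List.getElem_ofFn]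
  rw [cupAt, htake, hdrop, ofFin_ofFn, ofFin_ofFn, cup]

theorem isOSimplex_iff {X : SComplex V} {k : ℕ} {f : Fin k → V} :
    X.IsOSimplex f ↔ (List.ofFn f).toFinset ∈ X.faces := by
  have : (List.ofFn f).toFinset = Finset.image f Finset.univ := by
    ext; simp [List.mem_ofFn, eq_comm]
  rw [SComplex.IsOSimplex, this]

theorem isCocycleOn_ofFin {X : SComplex V} {k : ℕ} {c : (Fin (k + 1) → V) → R}
    (hc : X.IsCocycle c) : IsCocycleOn X (ofFin (k + 1) c) := fun _ hl =>
  (isHomogeneous_ofFin c).coboundary.eq_zero_of_ofFn (P := fun l => l.toFinset ∈ X.faces)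
    (fun f hf => by rw [← cobdry_eq_coboundary]; exact hc f (isOSimplex_iff.mpr hf)) hl

theorem vanishesOn_ofFin_sub {X : SComplex V} {S : Set V} {k : ℕ}
    {c : (Fin (k + 2) → V) → R} {b : (Fin (k + 1) → V) → R}
    (hb : ∀ f : Fin (k + 2) → V, X.IsOSimplex f → (∀ i, f i ∈ S) → c f = cobdry b f) :
    VanishesOn X (ofFin (k + 2) c - coboundary (ofFin (k + 1) b)) S := fun _ hl hS =>
  ((isHomogeneous_ofFin c).sub (isHomogeneous_ofFin b).coboundary).eq_zero_of_ofFn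
    (P := fun l => l.toFinset ∈ X.faces ∧ ∀ v ∈ l, v ∈ S)
    (fun f ⟨hf, hfS⟩ => by
      rw [Pi.sub_apply, ofFin_ofFn, ← cobdry_eq_coboundary,
        hb f (isOSimplex_iff.mpr hf) fun i => hfS _ (List.mem_ofFn.mpr ⟨i, rfl⟩), sub_self])
    ⟨hl, hS⟩

theorem trivialOn_of_eq_coboundary {X : SComplex V} {S : Set V} {k : ℕ}
    {c : (Fin (k + 2) → V) → R} (E : List V → R)
    (h : ∀ f : Fin (k + 2) → V, X.IsOSimplex f → (∀ i, f i ∈ S) →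
      c f = coboundary E (List.ofFn f)) :
    X.TrivialOn c S := by
  refine ⟨fun f => E (List.ofFn f), fun f hf hS => ?_⟩
  rw [h f hf hS, cobdry_eq_coboundary]
  refine coboundary_congr fun i hi => ?_
  exact (ofFin_comp_ofFn E (by grind)).symm

end FinCochains

end ListCochain

theorem cup_lemma_LS_general {V : Type} [DecidableEq V] (X : SComplex V)
    {R : Type} [CommRing R] (Y Z : Set V) (hcover : Y ∪ Z = Set.univ)
    (p q : ℕ)
    (c : (Fin (p + 2) → V) → R) (d : (Fin (q + 2) → V) → R)
    (hc : X.IsCocycle c) (hd : X.IsCocycle d)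
    (hcup : ¬ X.TrivialOn (cup c d) Set.univ)
    (hY : X.TrivialOn c Y) :
    ¬ X.TrivialOn d Z := by
  rintro ⟨bZ, hbZ⟩
  obtain ⟨bY, hbY⟩ := hY
  cases isEmpty_or_nonempty V
  · exact hcup ⟨0, fun f _ _ => isEmptyElim (f 0)⟩
  obtain ⟨E, hE⟩ := ListCochain.exists_cupAt_eq_coboundary_of_cohomologous hcover
    (ListCochain.isCocycleOn_ofFin hc) (ListCochain.isCocycleOn_ofFin hd)
    ((ListCochain.isHomogeneous_ofFin c).sub (ListCochain.isHomogeneous_ofFin bY).coboundary)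
    (ListCochain.vanishesOn_ofFin_sub hbY) (ListCochain.vanishesOn_ofFin_sub hbZ)
  refine hcup (ListCochain.trivialOn_of_eq_coboundary E fun f hf _ => ?_)
  rw [ListCochain.cup_eq_cupAt]
  exact hE _ (ListCochain.isOSimplex_iff.mp hf) (by simp)

/-- **Lemma (Lusternik–Schnirelmann-type lemma for cup products).**
Let the vertex set of `X` be partitioned as `V(X) = Y ⊔ Z`, and let `c` and `d` be
cocycles (of positive degrees `p+1` and `q+1`, coefficients in a ring `R`) whose cup
product is not zero in cohomology.  If the class of `c` restricts trivially to `⟨Y⟩`,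
then the class of `d` does not restrict trivially to `⟨Z⟩`. -/
theorem cup_lemma_LS {V : Type} [Fintype V] [DecidableEq V] (X : SComplex V)
    {R : Type} [CommRing R] (Y Z : Set V) (hcover : Y ∪ Z = Set.univ)
    (hdisj : Disjoint Y Z) (p q : ℕ)
    (c : (Fin (p + 2) → V) → R) (d : (Fin (q + 2) → V) → R)
    (hc : X.IsCocycle c) (hd : X.IsCocycle d)
    (hcup : ¬ X.TrivialOn (cup c d) Set.univ)
    (hY : X.TrivialOn c Y) :
    ¬ X.TrivialOn d Z :=
  cup_lemma_LS_general X Y Z hcover p q c d hc hd hcup hY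
end

section
/- Fix real numbers 0 ≤ L₁ ≤ L₂ ≤ … ≤ L_n and define the monotone continuous function V_n(r; L₁, …, L_n) by: V_n(r) = (2r)^n/n! for 0 < r ≤ L₁/2; V_n(r) = L₁⋯L_{k}·(2r)^{n−k}/n! for L_k/2 < r ≤ L_{k+1}/2 (k = 1, …, n−1); and V_n(r) = L₁⋯L_n/n! for r > L_n/2. Then for every r ≥ 0, 2·∫₀^r V_{n−1}(t; L₁, …, L_{n−1}) dt ≥ V_n(r; L₁, …, L_n). -/
open scoped BigOperators

/-- The piecewise-polynomial volume bound `V_n(r; L₀, …, L_{n-1})`: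
with `k` the number of indices `i < n` with `L i < 2r`, it equals
`L₀ ⋯ L_{k-1} (2r)^{n-k} / n!`.  For monotone nonnegative `L` this is exactly the
piecewise definition `V_n(r) = (2r)ⁿ/n!` for `0 < r ≤ L₀/2`, …,
`V_n(r) = L₀⋯L_{n-1}/n!` for `r > L_{n-1}/2`. -/
noncomputable def Vfun (n : ℕ) (L : ℕ → ℝ) (r : ℝ) : ℝ :=
  (∏ i ∈ Finset.range ({i : ℕ | i < n ∧ L i < 2 * r}.ncard), L i) *
    (2 * r) ^ (n - {i : ℕ | i < n ∧ L i < 2 * r}.ncard) / (Nat.factorial n)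

noncomputable def kf (n : ℕ) (L : ℕ → ℝ) (r : ℝ) : ℕ :=
  {i : ℕ | i < n ∧ L i < 2 * r}.ncard

lemma kf_eq_card (n : ℕ) (L : ℕ → ℝ) (r : ℝ) :
    kf n L r = ((Finset.range n).filter (fun i => L i < 2 * r)).card := by
  rw [kf, ← Set.ncard_coe_finset]; congr 1; ext i; simp

lemma mem_iff (n : ℕ) (L : ℕ → ℝ) (r : ℝ)
    (hmono : ∀ i j, i ≤ j → j < n → L i ≤ L j) (i : ℕ) :
    (i < n ∧ L i < 2 * r) ↔ i < kf n L r := by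
  rw [kf_eq_card]
  set s := (Finset.range n).filter (fun i => L i < 2 * r) with hs
  have hmem : ∀ j, j ∈ s ↔ (j < n ∧ L j < 2 * r) := by intro j; simp [hs]
  constructor
  · rintro ⟨hin, hLi⟩
    have hsub : Finset.range (i + 1) ⊆ s := by
      intro j hj
      rw [Finset.mem_range] at hj
      rw [hmem]
      exact ⟨lt_of_le_of_lt (Nat.lt_succ_iff.mp hj) hin,
        lt_of_le_of_lt (hmono j i (Nat.lt_succ_iff.mp hj) hin) hLi⟩
    simpa using Finset.card_le_card hsub
  · intro hi
    by_contra hni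
    have hsub : s ⊆ Finset.range i := by
      intro j hj
      rw [hmem] at hj
      rw [Finset.mem_range]
      by_contra hji
      push_neg at hji
      exact hni ⟨lt_of_le_of_lt hji hj.1, lt_of_le_of_lt (hmono i j hji hj.1) hj.2⟩
    have := Finset.card_le_card hsub
    simp at this
    omega

lemma kf_le (n : ℕ) (L : ℕ → ℝ) (r : ℝ) : kf n L r ≤ n := by
  rw [kf_eq_card]
  exact (Finset.card_filter_le _ _).trans (by simp)

lemma kf_mono (n : ℕ) (L : ℕ → ℝ) {t s : ℝ} (h : t ≤ s) : kf n L t ≤ kf n L s := by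
  rw [kf_eq_card, kf_eq_card]
  apply Finset.card_le_card
  intro i hi
  simp only [Finset.mem_filter, Finset.mem_range] at *
  exact ⟨hi.1, lt_of_lt_of_le hi.2 (by linarith)⟩

lemma Vfun_def (n : ℕ) (L : ℕ → ℝ) (r : ℝ) :
    Vfun n L r = (∏ i ∈ Finset.range (kf n L r), L i) *
      (2 * r) ^ (n - kf n L r) / (Nat.factorial n) := rfl

lemma prod_nn (n : ℕ) (L : ℕ → ℝ) (hL0 : ∀ i < n, 0 ≤ L i) {k : ℕ} (hk : k ≤ n) :
    0 ≤ ∏ i ∈ Finset.range k, L i :=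
  Finset.prod_nonneg fun i hi => hL0 i (lt_of_lt_of_le (Finset.mem_range.mp hi) hk)

lemma Vfun_nonneg (n : ℕ) (L : ℕ → ℝ) (hL0 : ∀ i < n, 0 ≤ L i) {r : ℝ} (hr : 0 ≤ r) :
    0 ≤ Vfun n L r := by
  rw [Vfun_def]
  have := prod_nn n L hL0 (kf_le n L r)
  positivity

lemma Vfun_mono (n : ℕ) (L : ℕ → ℝ) (hL0 : ∀ i < n, 0 ≤ L i)
    (hmono : ∀ i j, i ≤ j → j < n → L i ≤ L j) {t s : ℝ} (ht : 0 ≤ t) (hts : t ≤ s) :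
    Vfun n L t ≤ Vfun n L s := by
  rw [Vfun_def, Vfun_def]
  set k := kf n L t with hk
  set k' := kf n L s with hk'
  have hkk' : k ≤ k' := kf_mono n L hts
  have hk'n : k' ≤ n := kf_le n L s
  have hkn : k ≤ n := kf_le n L t
  have hfact : (0:ℝ) < Nat.factorial n := by positivity
  rw [div_le_div_iff_of_pos_right hfact]
  -- product split
  have hsplit : (∏ i ∈ Finset.range k', L i)
      = (∏ i ∈ Finset.range k, L i) * ∏ i ∈ Finset.Ico k k', L i :=
    (Finset.prod_range_mul_prod_Ico L hkk').symm
  have hIco : (2*t) ^ (k' - k) ≤ ∏ i ∈ Finset.Ico k k', L i := by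
    have : ∏ i ∈ Finset.Ico k k', (2*t) ≤ ∏ i ∈ Finset.Ico k k', L i := by
      apply Finset.prod_le_prod (fun _ _ => by linarith)
      intro i hi
      rw [Finset.mem_Ico] at hi
      have hin : i < n := lt_of_lt_of_le hi.2 hk'n
      have := (mem_iff n L t hmono i).mp
      by_contra hlt
      push_neg at hlt
      have : i < k := (mem_iff n L t hmono i).mp ⟨hin, hlt⟩
      omega
    simpa [Finset.prod_const, Nat.card_Ico] using this
  have hP : 0 ≤ ∏ i ∈ Finset.range k, L i := prod_nn n L hL0 hkn
  have hpowsplit : (2*t) ^ (n - k) = (2*t) ^ (k' - k) * (2*t) ^ (n - k') := by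
    rw [← pow_add]; congr 1; omega
  calc (∏ i ∈ Finset.range k, L i) * (2*t) ^ (n - k)
      = (∏ i ∈ Finset.range k, L i) * ((2*t) ^ (k' - k) * (2*t) ^ (n - k')) := by
        rw [hpowsplit]
    _ ≤ (∏ i ∈ Finset.range k, L i) * ((∏ i ∈ Finset.Ico k k', L i) * (2*s) ^ (n - k')) := by
        apply mul_le_mul_of_nonneg_left _ hP
        apply mul_le_mul hIco (pow_le_pow_left₀ (by linarith) (by linarith) _)
          (by positivity) (le_trans (by positivity) hIco)
    _ = (∏ i ∈ Finset.range k', L i) * (2*s) ^ (n - k') := by rw [hsplit]; ring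

lemma Vfun_scale (n : ℕ) (L : ℕ → ℝ) (hL0 : ∀ i < n, 0 ≤ L i)
    (hmono : ∀ i j, i ≤ j → j < n → L i ≤ L j) {t r : ℝ} (ht : 0 ≤ t) (htr : t ≤ r) :
    Vfun n L r * t ^ n ≤ Vfun n L t * r ^ n := by
  rw [Vfun_def, Vfun_def]
  set k := kf n L t with hk
  set k' := kf n L r with hk'
  have hkk' : k ≤ k' := kf_mono n L htr
  have hk'n : k' ≤ n := kf_le n L r
  have hkn : k ≤ n := kf_le n L t
  have hfact : (0:ℝ) < Nat.factorial n := by positivity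
  rw [div_mul_eq_mul_div, div_mul_eq_mul_div, div_le_div_iff_of_pos_right hfact]
  have hP : 0 ≤ ∏ i ∈ Finset.range k, L i := prod_nn n L hL0 hkn
  have hsplit : (∏ i ∈ Finset.range k', L i)
      = (∏ i ∈ Finset.range k, L i) * ∏ i ∈ Finset.Ico k k', L i :=
    (Finset.prod_range_mul_prod_Ico L hkk').symm
  have hIco : ∏ i ∈ Finset.Ico k k', L i ≤ (2*r) ^ (k' - k) := by
    have : ∏ i ∈ Finset.Ico k k', L i ≤ ∏ i ∈ Finset.Ico k k', (2*r) := by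
      apply Finset.prod_le_prod
      · intro i hi
        rw [Finset.mem_Ico] at hi
        exact hL0 i (lt_of_lt_of_le hi.2 hk'n)
      · intro i hi
        rw [Finset.mem_Ico] at hi
        exact le_of_lt (((mem_iff n L r hmono i).mpr hi.2).2)
    simpa [Finset.prod_const, Nat.card_Ico] using this
  calc (∏ i ∈ Finset.range k', L i) * (2*r) ^ (n - k') * t ^ n
      = (∏ i ∈ Finset.range k, L i) * (∏ i ∈ Finset.Ico k k', L i) *
          (2*r) ^ (n - k') * t ^ n := by rw [hsplit]
    _ ≤ (∏ i ∈ Finset.range k, L i) * (2*r) ^ (k' - k) *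
          (2*r) ^ (n - k') * t ^ n := by
        have h2r : (0:ℝ) ≤ 2*r := by linarith
        have := mul_le_mul_of_nonneg_left hIco hP
        have h1 : (0:ℝ) ≤ (2*r) ^ (n - k') := by positivity
        have h2 : (0:ℝ) ≤ t ^ n := by positivity
        nlinarith [mul_le_mul_of_nonneg_right (mul_le_mul_of_nonneg_right this h1) h2]
    _ = (∏ i ∈ Finset.range k, L i) * (2*r) ^ (n - k) * t ^ n := by
        rw [mul_assoc (∏ i ∈ Finset.range k, L i), ← pow_add]
        congr 3; omega
    _ = (∏ i ∈ Finset.range k, L i) * 2 ^ (n - k) * (r ^ (n - k) * t ^ n) := by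
        rw [mul_pow]; ring
    _ ≤ (∏ i ∈ Finset.range k, L i) * 2 ^ (n - k) * (t ^ (n - k) * r ^ n) := by
        apply mul_le_mul_of_nonneg_left _ (mul_nonneg hP (by positivity))
        have e1 : t ^ n = t ^ (n - k) * t ^ k := by rw [← pow_add]; congr 1; omega
        have e2 : r ^ n = r ^ (n - k) * r ^ k := by rw [← pow_add]; congr 1; omega
        rw [e1, e2]
        have htk : t ^ k ≤ r ^ k := pow_le_pow_left₀ ht htr k
        have h1 : (0:ℝ) ≤ r ^ (n-k) := pow_nonneg (ht.trans htr) _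
        have h2 : (0:ℝ) ≤ t ^ (n-k) := pow_nonneg ht _
        calc r ^ (n-k) * (t ^ (n-k) * t ^ k) = (r ^ (n-k) * t ^ k) * t ^ (n-k) := by ring
          _ ≤ (r ^ (n-k) * r ^ k) * t ^ (n-k) := by
              apply mul_le_mul_of_nonneg_right _ h2
              exact mul_le_mul_of_nonneg_left htk h1
          _ = t ^ (n-k) * (r ^ (n-k) * r ^ k) := by ring
    _ = (∏ i ∈ Finset.range k, L i) * (2*t) ^ (n - k) * r ^ n := by
        rw [mul_pow]; ring

lemma Vfun_step (n : ℕ) (hn : 1 ≤ n) (L : ℕ → ℝ) (hL0 : ∀ i < n, 0 ≤ L i)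
    (hmono : ∀ i j, i ≤ j → j < n → L i ≤ L j) {r : ℝ} (hr : 0 ≤ r) :
    (n : ℝ) * Vfun n L r ≤ 2 * r * Vfun (n-1) L r := by
  obtain ⟨m, rfl⟩ : ∃ m, n = m + 1 := ⟨n-1, by omega⟩
  simp only [Nat.add_sub_cancel]
  set k := kf (m+1) L r with hkdef
  have hkle : k ≤ m+1 := kf_le _ L r
  have hmono' : ∀ i j, i ≤ j → j < m → L i ≤ L j := fun i j h1 h2 => hmono i j h1 (by omega)
  have hkm : kf m L r = min m k := by
    have h : ∀ i, i < kf m L r ↔ (i < m ∧ i < k) := by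
      intro i
      rw [← mem_iff m L r hmono' i, hkdef, ← mem_iff (m+1) L r hmono i]
      constructor
      · rintro ⟨h1, h2⟩; exact ⟨h1, by omega, h2⟩
      · rintro ⟨h1, _, h3⟩; exact ⟨h1, h3⟩
    have h1 := h (kf m L r); have h2 := h (min m k); omega
  rw [Vfun_def, Vfun_def, hkm]
  have hfact : ((m+1).factorial : ℝ) = (m+1) * Nat.factorial m := by
    rw [Nat.factorial_succ]; push_cast; ring
  have hfm : (0:ℝ) < Nat.factorial m := by positivity
  rcases le_or_gt k m with hk | hk
  · rw [min_eq_right hk]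
    apply le_of_eq
    have hpow : (2*r) ^ (m+1-k) = (2*r) * (2*r) ^ (m-k) := by
      rw [← pow_succ']
      congr 1; omega
    rw [hpow, hfact]
    have hm1 : ((m:ℝ)+1) ≠ 0 := by positivity
    push_cast
    field_simp
    ring
  · have hkeq : k = m+1 := by omega
    have hkeq' : kf (m+1) L r = m+1 := by rw [← hkdef]; exact hkeq
    rw [hkeq', min_eq_left (by omega)]
    have hLm : L m < 2*r := ((mem_iff (m+1) L r hmono m).mpr (by omega)).2
    have hPm : 0 ≤ ∏ i ∈ Finset.range m, L i := prod_nn (m+1) L hL0 (by omega)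
    have hsucc : (∏ i ∈ Finset.range (m+1), L i) = (∏ i ∈ Finset.range m, L i) * L m :=
      Finset.prod_range_succ L m
    rw [hsucc, hfact]
    simp only [Nat.sub_self, pow_zero, mul_one]
    have hm1 : (0:ℝ) < (m:ℝ)+1 := by positivity
    have h2 : (∏ i ∈ Finset.range m, L i) * L m ≤ (∏ i ∈ Finset.range m, L i) * (2*r) :=
      mul_le_mul_of_nonneg_left hLm.le hPm
    push_cast
    rw [← mul_div_assoc, ← mul_div_assoc, div_le_div_iff₀ (by positivity) hfm]
    nlinarith [mul_le_mul_of_nonneg_right h2 (mul_nonneg hm1.le hfm.le)]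


/-- **Lemma (integral inequality for the volume bounds).**
For `0 ≤ L₀ ≤ L₁ ≤ … ≤ L_{n-1}` and every `r ≥ 0`,
`2 ∫₀ʳ V_{n-1}(t; L₀, …, L_{n-2}) dt ≥ V_n(r; L₀, …, L_{n-1})`. -/
theorem Vfun_integral_lower_bound (n : ℕ) (hn : 1 ≤ n) (L : ℕ → ℝ)
    (hL0 : ∀ i < n, 0 ≤ L i) (hmono : ∀ i j, i ≤ j → j < n → L i ≤ L j)
    (r : ℝ) (hr : 0 ≤ r) :
    Vfun n L r ≤ 2 * ∫ t in (0 : ℝ)..r, Vfun (n - 1) L t := by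
  set m := n - 1 with hm
  have hnm : n = m + 1 := by omega
  rcases eq_or_lt_of_le hr with h0 | hrpos
  · rw [← h0]
    simp only [intervalIntegral.integral_same, mul_zero]
    have hk : kf n L 0 = 0 := by
      rw [kf_eq_card, Finset.card_eq_zero, Finset.filter_eq_empty_iff]
      intro i hi
      rw [Finset.mem_range] at hi
      have := hL0 i hi
      push_neg
      linarith
    rw [Vfun_def, hk]
    simp [zero_pow (show n ≠ 0 by omega)]
  · have hL0' : ∀ i < m, 0 ≤ L i := fun i h => hL0 i (by omega)
    have hmono' : ∀ i j, i ≤ j → j < m → L i ≤ L j := fun i j a b => hmono i j a (by omega)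
    have hint1 : IntervalIntegrable (Vfun m L) MeasureTheory.volume 0 r := by
      apply MonotoneOn.intervalIntegrable
      rw [Set.uIcc_of_le hr]
      exact fun x hx y _ hxy => Vfun_mono m L hL0' hmono' hx.1 hxy
    have hint2 : IntervalIntegrable (fun t => Vfun m L r / r ^ m * t ^ m)
        MeasureTheory.volume 0 r :=
      ((continuous_const.mul (continuous_pow m)).intervalIntegrable _ _)
    have hpt : ∀ t ∈ Set.Icc (0:ℝ) r, Vfun m L r / r ^ m * t ^ m ≤ Vfun m L t := by
      intro t ht
      rw [div_mul_eq_mul_div, div_le_iff₀ (pow_pos hrpos m)]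
      exact Vfun_scale m L hL0' hmono' ht.1 ht.2
    have hle : (∫ t in (0:ℝ)..r, Vfun m L r / r^m * t^m) ≤ ∫ t in (0:ℝ)..r, Vfun m L t :=
      intervalIntegral.integral_mono_on hr hint2 hint1 hpt
    have hrm : r ^ m ≠ 0 := ne_of_gt (pow_pos hrpos m)
    have hcast : ((m:ℝ) + 1) = (n:ℝ) := by rw [hnm]; push_cast; ring
    have hcalc : (∫ t in (0:ℝ)..r, Vfun m L r / r^m * t^m) = Vfun m L r * r / n := by
      rw [intervalIntegral.integral_const_mul, integral_pow]
      rw [← hcast]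
      have hm1 : ((m:ℝ) + 1) ≠ 0 := by positivity
      field_simp
      rw [pow_succ]
      ring
    have hstep := Vfun_step n hn L hL0 hmono hr
    rw [← hm] at hstep
    have hn' : (0:ℝ) < n := by exact_mod_cast Nat.pos_of_ne_zero (by omega)
    calc Vfun n L r ≤ 2 * r * Vfun m L r / n := (le_div_iff₀ hn').mpr (by linarith)
      _ = 2 * (Vfun m L r * r / n) := by ring
      _ = 2 * ∫ t in (0:ℝ)..r, Vfun m L r / r^m * t^m := by rw [hcalc]
      _ ≤ 2 * ∫ t in (0:ℝ)..r, Vfun m L t := by linarith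
end

section
/- Let X be a compact geodesic metric space, let A be an abelian group, and let φ be a homomorphism from the fundamental group of X to A (equivalently, a degree-1 cohomology class ξ of X with coefficients in A). Let L(φ) be the infimum of lengths of rectifiable loops in X on which φ evaluates non-trivially. If r < L(φ)/2, then φ evaluates trivially on every rectifiable loop contained in a metric ball of radius r; that is, ξ restricts trivially to every metric ball of radius r. -/
open scoped ENNReal
attribute [local instance] Path.Homotopic.setoid

/-- The length of a path in a metric space: its total variation. -/
noncomputable def pathLength {X : Type} [MetricSpace X] {x y : X} (γ : Path x y) : ℝ≥0∞ :=
  eVariationOn (fun t => γ t) Set.univ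

/-- The value of a homomorphism `φ : π₁(X, x₀) → A` (`A` abelian) on a loop `γ` based at
an arbitrary point `y`, computed by conjugating with a path `p` from `x₀` to `y`; since
`A` is abelian it does not depend on the choice of `p`. -/
noncomputable def evalLoop {X : Type} [TopologicalSpace X] {A : Type} [CommGroup A]
    {x₀ y : X} (φ : FundamentalGroup X x₀ →* A) (p : Path x₀ y) (γ : Path y y) : A :=
  φ (FundamentalGroup.fromPath (X := TopCat.of X) ⟦(p.trans γ).trans p.symm⟧)

/-!
Join every point `u` of the ball `B(x, r)` to its centre by a geodesic `c u`, of length at most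
`r`. Closing up a path `β` from `u` to `w` by these spokes gives a loop `c u ⬝ β ⬝ (c w)⁻¹` at `x`,
and the value of `φ` on it is multiplicative under concatenation of paths. When `β` is a piece
of `γ` of length less than `L(φ) - 2r`, the closed-up loop is shorter than `L(φ)`, so `φ`
vanishes on it. As the variation of the rectifiable loop `γ` is continuous, the value of `φ` on
the closed-up initial pieces of `γ` is a locally constant function of the endpoint on `[0, 1]`,
hence constant; at the endpoint `1` it is the value of `φ` on `γ` itself.
-/

open Set unitInterval Filter Topology CategoryTheory

section EvalPath

variable {X : Type} [TopologicalSpace X] {A : Type} [CommGroup A] {x₀ : X}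
  (φ : FundamentalGroup X x₀ →* A)

noncomputable def evalPath (b : ∀ u, Path x₀ u) {u w : X} (β : Path u w) : A :=
  φ (FundamentalGroup.fromPath (X := TopCat.of X) ⟦((b u).trans β).trans (b w).symm⟧)

local notation "⟪" p "⟫" => FundamentalGroupoid.fromPath (X := TopCat.of X) (Path.Homotopic.Quotient.mk p)

theorem map_fromArrow_comp (f g : FundamentalGroupoid.mk (X := TopCat.of X) x₀ ⟶ .mk x₀) :
    φ (FundamentalGroup.fromArrow (f ≫ g)) =
      φ (FundamentalGroup.fromArrow f) * φ (FundamentalGroup.fromArrow g) := by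
  rw [show FundamentalGroup.fromArrow (f ≫ g) =
      FundamentalGroup.fromArrow g * FundamentalGroup.fromArrow f from rfl, map_mul, mul_comm]

theorem map_fromArrow_conj {m : FundamentalGroupoid (TopCat.of X)} (a a' : .mk x₀ ⟶ m)
    (l : m ⟶ m) :
    φ (FundamentalGroup.fromArrow ((a ≫ l) ≫ Groupoid.inv a)) =
      φ (FundamentalGroup.fromArrow ((a' ≫ l) ≫ Groupoid.inv a')) := by
  have hconj : (a ≫ l) ≫ Groupoid.inv a =
      (a ≫ Groupoid.inv a') ≫ ((a' ≫ l) ≫ Groupoid.inv a') ≫ (a' ≫ Groupoid.inv a) := by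
    simp [Groupoid.inv_eq_inv]
  have hinv : (a ≫ Groupoid.inv a') ≫ (a' ≫ Groupoid.inv a) = 𝟙 _ := by
    simp [Groupoid.inv_eq_inv]
  rw [hconj, map_fromArrow_comp, map_fromArrow_comp, mul_left_comm, ← map_fromArrow_comp, hinv]
  exact mul_eq_left.mpr (map_one φ)

theorem evalLoop_eq_evalLoop {y : X} (p p' : Path x₀ y) (γ : Path y y) :
    evalLoop φ p γ = evalLoop φ p' γ :=
  map_fromArrow_conj φ ⟪p⟫ ⟪p'⟫ ⟪γ⟫

theorem evalPath_eq_evalLoop (b : ∀ u, Path x₀ u) {y : X} (γ : Path y y) :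
    evalPath φ b γ = evalLoop φ (b y) γ :=
  rfl

theorem evalPath_eq_comp (b : ∀ u, Path x₀ u) {u w : X} (β : Path u w) :
    evalPath φ b β = φ (FundamentalGroup.fromArrow ((⟪b u⟫ ≫ ⟪β⟫) ≫ Groupoid.inv ⟪b w⟫)) :=
  rfl

theorem evalPath_trans (b : ∀ u, Path x₀ u) {u v w : X} (β₁ : Path u v) (β₂ : Path v w) :
    evalPath φ b (β₁.trans β₂) = evalPath φ b β₁ * evalPath φ b β₂ := by
  have hsplit : (⟪b u⟫ ≫ ⟪β₁⟫ ≫ ⟪β₂⟫) ≫ Groupoid.inv ⟪b w⟫ =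
      ((⟪b u⟫ ≫ ⟪β₁⟫) ≫ Groupoid.inv ⟪b v⟫) ≫ ((⟪b v⟫ ≫ ⟪β₂⟫) ≫ Groupoid.inv ⟪b w⟫) := by
    simp [Groupoid.inv_eq_inv]
  rw [evalPath_eq_comp, evalPath_eq_comp, evalPath_eq_comp, ← map_fromArrow_comp, ← hsplit]
  rfl

theorem evalPath_congr (b : ∀ u, Path x₀ u) {u w : X} {β β' : Path u w}
    (h : β.Homotopic β') : evalPath φ b β = evalPath φ b β' := by
  rw [evalPath_eq_comp, evalPath_eq_comp, Path.Homotopic.Quotient.eq.mpr h]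

theorem evalPath_cast (b : ∀ u, Path x₀ u) {u w u' w' : X} (β : Path u w) (hu : u' = u)
    (hw : w' = w) : evalPath φ b (β.cast hu hw) = evalPath φ b β := by
  subst hu hw
  rfl

theorem evalPath_trans_eq_evalLoop {x : X} (p₀ : Path x₀ x) (c : ∀ u, Path x u) {u w : X}
    (β : Path u w) :
    evalPath φ (fun u => p₀.trans (c u)) β = evalLoop φ p₀ ((c u).trans (β.trans (c w).symm)) := by
  change φ (FundamentalGroup.fromArrow (((⟪p₀⟫ ≫ ⟪c u⟫) ≫ ⟪β⟫) ≫ Groupoid.inv (⟪p₀⟫ ≫ ⟪c w⟫))) =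
    φ (FundamentalGroup.fromArrow ((⟪p₀⟫ ≫ ⟪c u⟫ ≫ ⟪β⟫ ≫ Groupoid.inv ⟪c w⟫) ≫ Groupoid.inv ⟪p₀⟫))
  simp [Groupoid.inv_eq_inv]

end EvalPath

theorem BoundedVariationOn.tendsto_eVariationOn_uIcc_zero {α E : Type*} [LinearOrder α]
    [TopologicalSpace α] [OrderTopology α] [PseudoEMetricSpace E] {f : α → E}
    (hf : BoundedVariationOn f univ) {x : α} (hx : ContinuousAt f x) :
    Tendsto (fun y => eVariationOn f (uIcc x y)) (𝓝 x) (𝓝 0) := by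
  have hleft := hf.tendsto_eVariationOn_Icc_zero_left hx.continuousWithinAt
  have hright := hf.tendsto_eVariationOn_Icc_zero_right x hx.continuousWithinAt
  simp only [univ_inter, nhdsWithin_univ] at hleft hright
  refine tendsto_of_tendsto_of_tendsto_of_le_of_le tendsto_const_nhds
    (by simpa using hleft.add hright) (fun _ => zero_le) fun y => ?_
  rcases le_total x y with hxy | hyx
  · rw [uIcc_of_le hxy]
    exact le_add_self
  · rw [uIcc_of_ge hyx]
    exact le_self_add

theorem Set.Icc.monotone_convexComb {a b : ℝ} {x y : Icc a b} (h : x ≤ y) :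
    Monotone (Icc.convexComb x y) := by
  intro s t hst
  have h' : (x : ℝ) ≤ y := h
  have hst' : (s : ℝ) ≤ t := hst
  change (Icc.convexComb x y s : ℝ) ≤ Icc.convexComb x y t
  simp only [Icc.coe_convexComb]
  nlinarith

section PathLength

variable {X : Type} [MetricSpace X]

theorem pathLength_symm {x y : X} (γ : Path x y) : pathLength γ.symm = pathLength γ := by
  rw [pathLength, show (fun t => γ.symm t) = (fun t => γ t) ∘ σ from rfl,
    eVariationOn.comp_eq_of_antitoneOn _ _ (fun s _ t _ hst => symm_le_symm.mpr hst), image_univ,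
    symm_bijective.surjective.range_eq, pathLength]

theorem pathLength_subpath {x y : X} (γ : Path x y) (t₀ t₁ : I) :
    pathLength (γ.subpath t₀ t₁) = eVariationOn γ (uIcc t₀ t₁) := by
  wlog h : t₀ ≤ t₁ generalizing t₀ t₁
  · rw [← Path.symm_subpath, pathLength_symm, this t₁ t₀ (le_of_not_ge h), uIcc_comm]
  rw [pathLength, show (fun t => γ.subpath t₀ t₁ t) = γ ∘ Icc.convexComb t₀ t₁ from rfl,
    eVariationOn.comp_eq_of_monotoneOn _ _ ((Icc.monotone_convexComb h).monotoneOn _),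
    image_univ, Path.range_subpathAux]

theorem pathLength_trans {x y z : X} (γ : Path x y) (γ' : Path y z) :
    pathLength (γ.trans γ') = pathLength γ + pathLength γ' := by
  set h : I := ⟨1 / 2, by norm_num, by norm_num⟩
  have hsplit := eVariationOn.Icc_add_Icc (γ.trans γ') (s := univ) (nonneg' (t := h))
    (le_one' (t := h)) (mem_univ h)
  simp only [univ_inter,
    show Icc (0 : I) 1 = univ from eq_univ_of_forall fun t => ⟨nonneg', le_one'⟩] at hsplit
  rw [pathLength, ← hsplit, ← uIcc_of_le (nonneg' (t := h)), ← uIcc_of_le (le_one' (t := h)),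
    ← pathLength_subpath, ← pathLength_subpath]
  congr 1
  · refine eVariationOn.eq_of_eqOn fun t _ => ?_
    change (γ.trans γ') (Icc.convexComb 0 h t) = γ t
    have ht : (Icc.convexComb 0 h t : ℝ) = t / 2 := by
      simp only [h, Icc.coe_convexComb, Icc.coe_zero]
      ring
    rw [← Path.extend_extends', Path.extend_trans_of_le_half _ _ (by linarith [t.2.2]), ht,
      mul_div_cancel₀ _ two_ne_zero, Path.extend_extends']
  · refine eVariationOn.eq_of_eqOn fun t _ => ?_
    change (γ.trans γ') (Icc.convexComb h 1 t) = γ' t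
    have ht : (Icc.convexComb h 1 t : ℝ) = (t + 1) / 2 := by
      simp only [h, Icc.coe_convexComb, Icc.coe_one]
      ring
    rw [← Path.extend_extends', Path.extend_trans_of_half_le _ _ (by linarith [t.2.1]), ht,
      mul_div_cancel₀ _ two_ne_zero, add_sub_cancel_right, Path.extend_extends']

end PathLength

section Triviality

variable {X : Type} [MetricSpace X] {A : Type} [CommGroup A] {x₀ : X}
  (φ : FundamentalGroup X x₀ →* A)

theorem evalLoop_eq_one_of_pathLength_lt_sInf {y : X} (p : Path x₀ y) (γ : Path y y)
    (h : pathLength γ < sInf {ℓ : ℝ≥0∞ | ∃ (y : X) (γ : Path y y) (p : Path x₀ y),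
      evalLoop φ p γ ≠ 1 ∧ pathLength γ = ℓ}) :
    evalLoop φ p γ = 1 := by
  by_contra hne
  exact h.not_ge (sInf_le ⟨y, γ, p, hne, rfl⟩)

theorem evalPath_eq_one_of_forall_subpath (b : ∀ u, Path x₀ u) {u w : X} (β : Path u w)
    (hβ : pathLength β ≠ ⊤) {ε : ℝ≥0∞} (hε : 0 < ε)
    (hsmall : ∀ t t' : I, eVariationOn β (uIcc t t') < ε → evalPath φ b (β.subpath t t') = 1) :
    evalPath φ b β = 1 := by
  have hnear : ∀ t, ∀ᶠ t' in 𝓝 t, evalPath φ b (β.subpath t t') = 1 := fun t =>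
    ((BoundedVariationOn.tendsto_eVariationOn_uIcc_zero hβ β.continuous.continuousAt).eventually
      (gt_mem_nhds hε)).mono fun t' => hsmall t t'
  have hconst : IsLocallyConstant fun t => evalPath φ b (β.subpath 0 t) := by
    refine IsLocallyConstant.iff_eventually_eq _ |>.mpr fun t => ?_
    filter_upwards [hnear t] with t' ht'
    rw [← evalPath_congr φ b ⟨Path.Homotopy.subpathTransSubpath β 0 t t'⟩, evalPath_trans, ht',
      mul_one]
  have h₁ := hconst.apply_eq_of_isPreconnected isPreconnected_univ (mem_univ 1) (mem_univ 0)
  simp only [Path.subpath_zero_one, evalPath_cast] at h₁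
  exact h₁.trans (hnear 0).self_of_nhds

end Triviality

theorem evalLoop_trivial_of_small_ball_general {X : Type} [MetricSpace X]
    (hgeo : ∀ x y : X, ∃ γ : Path x y, pathLength γ = ENNReal.ofReal (dist x y))
    {A : Type} [CommGroup A] (x₀ : X) (φ : FundamentalGroup X x₀ →* A)
    (L : ℝ≥0∞)
    (hL : L = sInf {ℓ : ℝ≥0∞ | ∃ (y : X) (γ : Path y y) (p : Path x₀ y),
      evalLoop φ p γ ≠ 1 ∧ pathLength γ = ℓ})
    (r : ℝ) (hr : ENNReal.ofReal (2 * r) < L)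
    (x y : X) (γ : Path y y)
    (hball : ∀ t, γ t ∈ Metric.closedBall x r)
    (hrect : pathLength γ ≠ ⊤) :
    ∀ p : Path x₀ y, evalLoop φ p γ = 1 := by
  intro p
  choose c hc using hgeo x
  have hspoke : ∀ t, pathLength (c (γ t)) ≤ ENNReal.ofReal r := fun t => by
    rw [hc]
    exact ENNReal.ofReal_le_ofReal (Metric.mem_closedBall'.mp (hball t))
  have hr0 : 0 ≤ r := dist_nonneg.trans (Metric.mem_closedBall.mp (hball 0))
  rw [evalLoop_eq_evalLoop φ p ((p.trans (c y).symm).trans (c y)), ← evalPath_eq_evalLoop φ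
    (fun u => (p.trans (c y).symm).trans (c u))]
  refine evalPath_eq_one_of_forall_subpath φ _ γ hrect (tsub_pos_of_lt hr) fun t t' ht => ?_
  rw [evalPath_trans_eq_evalLoop]
  refine evalLoop_eq_one_of_pathLength_lt_sInf φ _ _ (hL ▸ ?_)
  calc pathLength ((c (γ t)).trans ((γ.subpath t t').trans (c (γ t')).symm))
      ≤ ENNReal.ofReal r + (eVariationOn γ (uIcc t t') + ENNReal.ofReal r) := by
        rw [pathLength_trans, pathLength_trans, pathLength_symm, pathLength_subpath]
        gcongr <;> apply hspoke
    _ = ENNReal.ofReal (2 * r) + eVariationOn γ (uIcc t t') := by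
        rw [two_mul, ENNReal.ofReal_add hr0 hr0]
        ring
    _ < L := lt_tsub_iff_left.mp ht

/-- **Lemma (loops in small balls evaluate trivially).**
Let `X` be a compact geodesic metric space, `A` an abelian group and
`φ : π₁(X, x₀) → A` a homomorphism (equivalently, a degree-1 cohomology class of `X`
with coefficients in `A`).  Let `L(φ)` be the infimum of lengths of rectifiable loops
on which `φ` evaluates non-trivially.  If `2r < L(φ)`, then `φ` evaluates trivially on
every rectifiable loop contained in a metric ball of radius `r`. -/
theorem evalLoop_trivial_of_small_ball {X : Type} [MetricSpace X] [CompactSpace X]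
    [PathConnectedSpace X]
    (hgeo : ∀ x y : X, ∃ γ : Path x y, pathLength γ = ENNReal.ofReal (dist x y))
    {A : Type} [CommGroup A] (x₀ : X) (φ : FundamentalGroup X x₀ →* A)
    (L : ℝ≥0∞)
    (hL : L = sInf {ℓ : ℝ≥0∞ | ∃ (y : X) (γ : Path y y) (p : Path x₀ y),
      evalLoop φ p γ ≠ 1 ∧ pathLength γ = ℓ})
    (r : ℝ) (hr : ENNReal.ofReal (2 * r) < L)
    (x y : X) (γ : Path y y)
    (hball : ∀ t, γ t ∈ Metric.closedBall x r)
    (hrect : pathLength γ ≠ ⊤) :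
    ∀ p : Path x₀ y, evalLoop φ p γ = 1 :=
  evalLoop_trivial_of_small_ball_general hgeo x₀ φ L hL r hr x y γ hball hrect
end

section
/- Let X be a connected n-dimensional simplicial complex that is n-essential as a topological space (its classifying map f : X → K(π₁(X), 1) cannot be deformed into the (n−1)-skeleton of K(π₁(X), 1)). Then X is combinatorially n-essential: its vertex set cannot be partitioned into n or fewer inessential sets. -/
variable {V : Type} [DecidableEq V]

/-- The geometric realization of a finite simplicial complex: the set of probability
weightings of the vertices whose support spans a face, topologized as a subspace of
`V → ℝ`. -/
def SComplex.realization [Fintype V] (X : SComplex V) : Set (V → ℝ) :=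
  {f | (∀ v, 0 ≤ f v) ∧ (∑ v, f v = 1) ∧ ∃ s ∈ X.faces, ∀ v, f v ≠ 0 → v ∈ s}

/-- An open subset `U` of a space `T` is inessential if for every connected component
`C` of `U` and every connected component `D` of `T` the map `π₁(C) → π₁(D)` is trivial;
for locally path-connected `T` (such as the realization of a simplicial complex) this
says exactly that every loop contained in `U` is null-homotopic in `T`. -/
def TopInessential {T : Type} [TopologicalSpace T] (U : Set T) : Prop :=
  ∀ (y : T) (γ : Path y y), Set.range ⇑γ ⊆ U → γ.Homotopic (Path.refl y)

/-!
The open stars of the vertices of an inessential set `Y` form an inessential open set. Cut a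
loop in that set, by a Lebesgue number argument, into arcs each lying in the open star of one
vertex of `Y`; consecutive vertices lie in a common simplex, so the loop is conjugate to an edge
loop through vertices of `Y`, which is null-homotopic. The homotopies all come from contracting
star-shaped sets: an open star is star-shaped about its vertex and a closed simplex is convex.
A partition of the vertices into `n` inessential sets would thus give `n` inessential open sets
covering the realization.
-/

open Set CategoryTheory

section Paths

variable {X : Type*} [TopologicalSpace X]

def Path.codRestrict {S : Set X} {a b : S} (γ : Path (a : X) b) (hγ : range γ ⊆ S) : Path a b where
  toFun t := ⟨γ t, hγ (mem_range_self t)⟩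
  continuous_toFun := γ.continuous.subtype_mk _
  source' := Subtype.ext γ.source
  target' := Subtype.ext γ.target

theorem Path.exists_subpath_range_subset {ι : Type*} {a b : X} (γ : Path a b) {s : Set ι}
    {U : ι → Set X} (hU : ∀ i ∈ s, IsOpen (U i)) (hγ : range γ ⊆ ⋃ i ∈ s, U i) :
    ∃ (t : ℕ → unitInterval) (i : ℕ → ι) (N : ℕ), t 0 = 0 ∧ t N = 1 ∧
      ∀ n, i n ∈ s ∧ range (γ.subpath (t n) (t (n + 1))) ⊆ U (i n) := by
  obtain ⟨t, ht0, htm, ⟨N, htN⟩, ht⟩ :=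
    exists_monotone_Icc_subset_open_cover_unitInterval (c := fun i : s => γ ⁻¹' U i)
      (fun i => (hU i i.2).preimage γ.continuous)
      (fun t _ => by simpa using hγ (mem_range_self t))
  choose i hi using ht
  refine ⟨t, fun n => i n, N, ht0, htN N le_rfl, fun n => ⟨(i n).2, ?_⟩⟩
  rw [γ.range_subpath_of_le _ _ (htm n.le_succ)]
  exact image_subset_iff.2 (hi n)

end Paths

section StarConvex

variable {E : Type*} [AddCommGroup E] [Module ℝ E] [TopologicalSpace E] [ContinuousAdd E]
  [ContinuousSMul ℝ E]

def Path.segmentIn {S : Set E} {a b : S} (h : segment ℝ (a : E) b ⊆ S) : Path a b :=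
  (Path.segment (a : E) b).codRestrict ((Path.range_segment _ _).trans_subset h)

theorem Path.range_segmentIn {S : Set E} {a b : S} (h : segment ℝ (a : E) b ⊆ S) :
    range (Path.segmentIn h) = (↑) ⁻¹' segment ℝ (a : E) b := by
  rw [← Path.range_segment]
  ext z
  exact ⟨fun ⟨t, ht⟩ => ⟨t, congrArg Subtype.val ht⟩, fun ⟨t, ht⟩ => ⟨t, Subtype.ext ht⟩⟩

theorem Path.Homotopic.of_starConvex {S A : Set E} {c : E} (hA : StarConvex ℝ c A) (hAS : A ⊆ S)
    {a b : S} {p q : Path a b} (hp : range p ⊆ (↑) ⁻¹' A) (hq : range q ⊆ (↑) ⁻¹' A) :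
    p.Homotopic q := by
  have := hA.contractibleSpace ⟨a, hp p.source_mem_range⟩
  let lift (r : Path a b) (hr : range r ⊆ (↑) ⁻¹' A) :
      Path (⟨a, hp p.source_mem_range⟩ : A) ⟨b, hp p.target_mem_range⟩ :=
    (r.map continuous_subtype_val).codRestrict (S := A) (by
      rw [Path.map_coe, range_comp]; exact image_subset_iff.2 hr)
  exact (SimplyConnectedSpace.paths_homotopic (lift p hp) (lift q hq)).map
    ⟨inclusion hAS, continuous_inclusion hAS⟩

end StarConvex

namespace SComplex

section

variable {V : Type} [Fintype V] (X : SComplex V)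

def simplex (s : Finset V) : Set (V → ℝ) :=
  {f | f ∈ stdSimplex ℝ V ∧ ∀ v, f v ≠ 0 → v ∈ s}

theorem convex_simplex (s : Finset V) : Convex ℝ (simplex s) := by
  rintro f ⟨hf, hfs⟩ g ⟨hg, hgs⟩ a b ha hb hab
  refine ⟨convex_stdSimplex ℝ V hf hg ha hb hab, fun v hv => ?_⟩
  by_contra hvs
  simp [not_imp_comm.1 (hfs v) hvs, not_imp_comm.1 (hgs v) hvs] at hv

theorem mem_realization_iff {f : V → ℝ} : f ∈ X.realization ↔ ∃ s ∈ X.faces, f ∈ simplex s :=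
  ⟨fun ⟨h0, h1, s, hs, h⟩ => ⟨s, hs, ⟨h0, h1⟩, h⟩, fun ⟨s, hs, ⟨h0, h1⟩, h⟩ => ⟨h0, h1, s, hs, h⟩⟩

theorem simplex_subset_realization {s : Finset V} (hs : s ∈ X.faces) :
    simplex s ⊆ X.realization :=
  fun _ hf => X.mem_realization_iff.2 ⟨s, hs, hf⟩

def openStar (v : V) : Set (V → ℝ) :=
  X.realization ∩ {f | f v ≠ 0}

theorem isOpen_preimage_openStar (v : V) :
    IsOpen ((↑) ⁻¹' X.openStar v : Set X.realization) := by
  rw [openStar, Subtype.preimage_coe_self_inter]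
  exact (isOpen_ne_fun (continuous_apply v) continuous_const).preimage continuous_subtype_val

theorem exists_mem_openStar (z : X.realization) : ∃ v, (z : V → ℝ) ∈ X.openStar v := by
  obtain ⟨v, -, hv⟩ := Finset.exists_ne_zero_of_sum_ne_zero (z.2.2.1.symm ▸ one_ne_zero)
  exact ⟨v, z.2, hv⟩

theorem homotopic_of_range_subset_simplex {s : Finset V} (hs : s ∈ X.faces)
    {a b : X.realization} {p q : Path a b} (hp : range p ⊆ (↑) ⁻¹' simplex s)
    (hq : range q ⊆ (↑) ⁻¹' simplex s) : p.Homotopic q :=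
  .of_starConvex ((convex_simplex s).starConvex (hp p.source_mem_range))
    (X.simplex_subset_realization hs) hp hq

end

variable {V : Type} [Fintype V] [DecidableEq V] (X : SComplex V)

theorem single_mem_simplex {s : Finset V} {v : V} (hv : v ∈ s) : Pi.single v 1 ∈ simplex s :=
  ⟨single_mem_stdSimplex ℝ v, fun w hw => by
    by_contra hws
    exact hw (Pi.single_eq_of_ne (by rintro rfl; exact hws hv) 1)⟩

def vertex (v : V) : X.realization :=
  ⟨Pi.single v 1, X.simplex_subset_realization (X.singleton_mem v)
    (single_mem_simplex (Finset.mem_singleton_self v))⟩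

theorem starConvex_openStar (v : V) : StarConvex ℝ (Pi.single v 1) (X.openStar v) := by
  rintro f ⟨hf, hfv⟩ a b ha hb hab
  obtain ⟨s, hs, hfs⟩ := X.mem_realization_iff.1 hf
  refine ⟨X.simplex_subset_realization hs
    (convex_simplex s (single_mem_simplex (hfs.2 v hfv)) hfs ha hb hab), ?_⟩
  have hfv' : 0 < f v := lt_of_le_of_ne (hfs.1.1 v) (Ne.symm hfv)
  show (a • Pi.single v 1 + b • f : V → ℝ) v ≠ 0
  simp only [Pi.add_apply, Pi.smul_apply, smul_eq_mul, Pi.single_eq_same, mul_one]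
  rcases ha.eq_or_lt with rfl | ha'
  · rw [zero_add] at hab; subst hab; simpa using hfv
  · positivity

def edgePath {u v : V} (h : X.graph.Adj u v) : Path (X.vertex u) (X.vertex v) :=
  Path.segmentIn (Subset.trans ((convex_simplex _).segment_subset
    (single_mem_simplex (Finset.mem_insert_self u {v}))
    (single_mem_simplex (Finset.mem_insert_of_mem (Finset.mem_singleton_self v))))
    (X.simplex_subset_realization h.2))

def toVertex (z : X.realization) {v : V} (hz : (z : V → ℝ) ∈ X.openStar v) :
    Path z (X.vertex v) :=
  Path.segmentIn (by
    rw [segment_symm]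
    exact Subset.trans ((X.starConvex_openStar v).segment_subset hz) inter_subset_left)

noncomputable def walkPath : ∀ {u v : V}, X.graph.Walk u v → Path (X.vertex u) (X.vertex v)
  | _, _, .nil => .refl _
  | _, _, .cons h p => (X.edgePath h).trans (walkPath p)

theorem range_edgePath_subset_simplex {u v : V} (h : X.graph.Adj u v) {s : Finset V}
    (hu : u ∈ s) (hv : v ∈ s) : range (X.edgePath h) ⊆ (↑) ⁻¹' simplex s := by
  rw [edgePath, Path.range_segmentIn]
  exact preimage_mono ((convex_simplex s).segment_subset (single_mem_simplex hu)
    (single_mem_simplex hv))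

theorem range_toVertex_subset_simplex {z : X.realization} {v : V}
    (hz : (z : V → ℝ) ∈ X.openStar v) {s : Finset V} (hzs : (z : V → ℝ) ∈ simplex s)
    (hv : v ∈ s) : range (X.toVertex z hz) ⊆ (↑) ⁻¹' simplex s := by
  rw [toVertex, Path.range_segmentIn]
  exact preimage_mono ((convex_simplex s).segment_subset hzs (single_mem_simplex hv))

theorem range_toVertex_subset_openStar {z : X.realization} {v : V}
    (hz : (z : V → ℝ) ∈ X.openStar v) : range (X.toVertex z hz) ⊆ (↑) ⁻¹' X.openStar v := by
  rw [toVertex, Path.range_segmentIn, segment_symm]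
  exact preimage_mono ((X.starConvex_openStar v).segment_subset hz)

theorem homotopic_of_range_subset_openStar (v : V) {a b : X.realization} {p q : Path a b}
    (hp : range p ⊆ (↑) ⁻¹' X.openStar v) (hq : range q ⊆ (↑) ⁻¹' X.openStar v) :
    p.Homotopic q :=
  .of_starConvex (X.starConvex_openStar v) inter_subset_left hp hq

theorem edgePath_trans_edgePath_symm {u v : V} (h : X.graph.Adj u v) :
    ((X.edgePath h).trans (X.edgePath h.symm)).Homotopic (.refl _) := by
  have hu : u ∈ ({u, v} : Finset V) := Finset.mem_insert_self u {v}
  have hv : v ∈ ({u, v} : Finset V) := Finset.mem_insert_of_mem (Finset.mem_singleton_self v)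
  refine X.homotopic_of_range_subset_simplex h.2 ?_ ?_
  · rw [Path.trans_range]
    exact union_subset (X.range_edgePath_subset_simplex h hu hv)
      (X.range_edgePath_subset_simplex h.symm hv hu)
  · rw [Path.refl_range]
    exact singleton_subset_iff.2 (single_mem_simplex hu)

theorem edgePath_trans_edgePath {u v w : V} (huv : X.graph.Adj u v) (hvw : X.graph.Adj v w)
    (huw : X.graph.Adj u w) (hface : ({u, v, w} : Finset V) ∈ X.faces) :
    ((X.edgePath huv).trans (X.edgePath hvw)).Homotopic (X.edgePath huw) := by
  have hu : u ∈ ({u, v, w} : Finset V) := by simp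
  have hv : v ∈ ({u, v, w} : Finset V) := by simp
  have hw : w ∈ ({u, v, w} : Finset V) := by simp
  refine X.homotopic_of_range_subset_simplex hface ?_ (X.range_edgePath_subset_simplex huw hu hw)
  rw [Path.trans_range]
  exact union_subset (X.range_edgePath_subset_simplex huv hu hv)
    (X.range_edgePath_subset_simplex hvw hv hw)

theorem walkPath_append {u v w : V} (p : X.graph.Walk u v) (q : X.graph.Walk v w) :
    (X.walkPath (p.append q)).Homotopic ((X.walkPath p).trans (X.walkPath q)) := by
  induction p with
  | nil => exact (Path.Homotopic.refl_trans _).symm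
  | cons h p ih =>
    exact ((Path.Homotopic.refl _).hcomp (ih q)).trans (Path.Homotopic.trans_assoc _ _ _).symm

theorem EdgeHomotopic.homotopic_walkPath {u v : V} {p q : X.graph.Walk u v}
    (h : X.EdgeHomotopic p q) : (X.walkPath p).Homotopic (X.walkPath q) := by
  induction h with
  | refl p => exact .refl _
  | symm _ ih => exact ih.symm
  | trans _ _ ih₁ ih₂ => exact ih₁.trans ih₂
  | cons h _ ih => exact (Path.Homotopic.refl _).hcomp ih
  | backtrack h p =>
    exact (Path.Homotopic.trans_assoc _ _ _).symm.trans
      (((X.edgePath_trans_edgePath_symm h).hcomp (.refl _)).trans (Path.Homotopic.refl_trans _))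
  | triangle huv hvw huw hface p =>
    exact (Path.Homotopic.trans_assoc _ _ _).symm.trans
      ((X.edgePath_trans_edgePath huv hvw huw hface).hcomp (.refl _))

theorem exists_toVertex_trans_walkPath_homotopic (z : X.realization) {u v : V}
    (hu : (z : V → ℝ) ∈ X.openStar u) (hv : (z : V → ℝ) ∈ X.openStar v) :
    ∃ c : X.graph.Walk u v, (∀ x ∈ c.support, x = u ∨ x = v) ∧
      ((X.toVertex z hu).trans (X.walkPath c)).Homotopic (X.toVertex z hv) := by
  obtain ⟨s, hs, hzs⟩ := X.mem_realization_iff.1 z.2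
  have hus : u ∈ s := hzs.2 u hu.2
  have hvs : v ∈ s := hzs.2 v hv.2
  by_cases huv : u = v
  · subst huv
    exact ⟨.nil, by simp, Path.Homotopic.trans_refl _⟩
  have hadj : X.graph.Adj u v := ⟨huv, X.down_closed s hs {u, v}
    (Finset.insert_subset hus (Finset.singleton_subset_iff.2 hvs)) (Finset.insert_nonempty u {v})⟩
  refine ⟨.cons hadj .nil, by simp, X.homotopic_of_range_subset_simplex hs ?_
    (X.range_toVertex_subset_simplex hv hzs hvs)⟩
  simp only [walkPath, Path.trans_range, Path.refl_range]
  exact union_subset (X.range_toVertex_subset_simplex hu hzs hus)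
    (union_subset (X.range_edgePath_subset_simplex hadj hus hvs)
      (singleton_subset_iff.2 (single_mem_simplex hvs)))

local notation "⟦" p "⟧₁" => FundamentalGroupoid.fromPath (Path.Homotopic.Quotient.mk p)

theorem exists_walk_subpath_homotopic {Y : Set V} {a b : X.realization} (γ : Path a b)
    (t : ℕ → unitInterval) (v : ℕ → V)
    (hv : ∀ n, v n ∈ Y ∧ range (γ.subpath (t n) (t (n + 1))) ⊆ (↑) ⁻¹' X.openStar (v n))
    (k : ℕ) :
    ∃ w : X.graph.Walk (v 0) (v k), (∀ x ∈ w.support, x ∈ Y) ∧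
      ∀ (h₀ : (γ (t 0) : V → ℝ) ∈ X.openStar (v 0))
        (hk : (γ (t k) : V → ℝ) ∈ X.openStar (v k)),
        ⟦γ.subpath (t 0) (t k)⟧₁ ≫ ⟦X.toVertex _ hk⟧₁ = ⟦X.toVertex _ h₀⟧₁ ≫ ⟦X.walkPath w⟧₁ := by
  induction k with
  | zero =>
    refine ⟨.nil, by simpa using (hv 0).1, fun h₀ hk => ?_⟩
    rw [Path.subpath_self]
    exact (Category.id_comp _).trans (Category.comp_id _).symm
  | succ k ih =>
    obtain ⟨w, hwY, hw⟩ := ih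
    have hk : (γ (t k) : V → ℝ) ∈ X.openStar (v k) := (hv k).2 (Path.source_mem_range _)
    have hzk : (γ (t (k + 1)) : V → ℝ) ∈ X.openStar (v k) := (hv k).2 (Path.target_mem_range _)
    have hzk' : (γ (t (k + 1)) : V → ℝ) ∈ X.openStar (v (k + 1)) :=
      (hv (k + 1)).2 (Path.source_mem_range _)
    obtain ⟨c, hcY, hc⟩ := X.exists_toVertex_trans_walkPath_homotopic _ hzk hzk'
    refine ⟨w.append c, fun x hx => ?_, fun h₀ hk' => ?_⟩
    · rcases (SimpleGraph.Walk.mem_support_append_iff _ _).1 hx with hx | hx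
      · exact hwY x hx
      · rcases hcY x hx with rfl | rfl
        exacts [(hv k).1, (hv (k + 1)).1]
    have split : ⟦γ.subpath (t 0) (t k)⟧₁ ≫ ⟦γ.subpath (t k) (t (k + 1))⟧₁ =
        ⟦γ.subpath (t 0) (t (k + 1))⟧₁ :=
      Quotient.sound ⟨Path.Homotopy.subpathTransSubpath γ _ _ _⟩
    have star : ⟦γ.subpath (t k) (t (k + 1))⟧₁ ≫ ⟦X.toVertex _ hzk⟧₁ = ⟦X.toVertex _ hk⟧₁ := by
      refine Quotient.sound (X.homotopic_of_range_subset_openStar (v k) ?_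
        (X.range_toVertex_subset_openStar hk))
      rw [Path.trans_range]
      exact union_subset (hv k).2 (X.range_toVertex_subset_openStar hzk)
    have conn : ⟦X.toVertex _ hzk⟧₁ ≫ ⟦X.walkPath c⟧₁ = ⟦X.toVertex _ hk'⟧₁ := Quotient.sound hc
    have app : ⟦X.walkPath (w.append c)⟧₁ = ⟦X.walkPath w⟧₁ ≫ ⟦X.walkPath c⟧₁ :=
      Quotient.sound (X.walkPath_append w c)
    rw [app, ← split, ← conn, Category.assoc, reassoc_of% star, reassoc_of% (hw h₀ hk)]

theorem Inessential.topInessential_openStar {Y : Set V} (hY : X.Inessential Y) :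
    TopInessential ((↑) ⁻¹' ⋃ v ∈ Y, X.openStar v : Set X.realization) := by
  intro y γ hγ
  obtain ⟨t, v, N, ht0, htN, hv⟩ := γ.exists_subpath_range_subset
    (fun v _ => X.isOpen_preimage_openStar v) (by simpa only [preimage_iUnion₂] using hγ)
  have hy₀ : (y : V → ℝ) ∈ X.openStar (v 0) := by
    simpa [ht0] using (hv 0).2 (Path.source_mem_range _)
  have hyN : (y : V → ℝ) ∈ X.openStar (v N) := by
    simpa [htN] using (hv N).2 (Path.source_mem_range _)
  obtain ⟨w, hwY, hw⟩ := X.exists_walk_subpath_homotopic γ t v hv N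
  obtain ⟨c, hcY, hc⟩ := X.exists_toVertex_trans_walkPath_homotopic y hyN hy₀
  have hnull : X.NullHomotopic (w.append c) := hY _ _ fun x hx => by
    rcases (SimpleGraph.Walk.mem_support_append_iff _ _).1 hx with hx | hx
    · exact hwY x hx
    · rcases hcY x hx with rfl | rfl
      exacts [(hv N).1, (hv 0).1]
  -- `γ.subpath 0 1` is `γ` only up to a cast of its endpoints
  rw [ht0, htN, Path.subpath_zero_one] at hw
  generalize γ.source = e₀, γ.target = e₁ at hw
  generalize γ 0 = a at e₀ hw
  generalize γ 1 = b at e₁ hw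
  subst a b
  have e₁ : ⟦γ⟧₁ ≫ ⟦X.toVertex y hyN⟧₁ = ⟦X.toVertex y hy₀⟧₁ ≫ ⟦X.walkPath w⟧₁ := hw hy₀ hyN
  have e₂ : ⟦X.toVertex y hyN⟧₁ ≫ ⟦X.walkPath c⟧₁ = ⟦X.toVertex y hy₀⟧₁ := Quotient.sound hc
  have e₃ : ⟦X.walkPath w⟧₁ ≫ ⟦X.walkPath c⟧₁ = 𝟙 _ :=
    (Quotient.sound (X.walkPath_append w c)).symm.trans (Quotient.sound hnull.homotopic_walkPath)
  refine (FundamentalGroupoid.fromPath_eq_iff_homotopic _ _).1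
    ((cancel_mono ⟦X.toVertex y hy₀⟧₁).1 ?_)
  calc ⟦γ⟧₁ ≫ ⟦X.toVertex y hy₀⟧₁ = ⟦γ⟧₁ ≫ ⟦X.toVertex y hyN⟧₁ ≫ ⟦X.walkPath c⟧₁ := by rw [e₂]
    _ = ⟦X.toVertex y hy₀⟧₁ := by rw [reassoc_of% e₁, e₃, Category.comp_id]
    _ = 𝟙 _ ≫ ⟦X.toVertex y hy₀⟧₁ := (Category.id_comp _).symm

end SComplex

theorem combEssential_of_topEssential_general {V : Type} [Fintype V] [DecidableEq V]
    (X : SComplex V) (n : ℕ)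
    (hess : ¬ ∃ U : Fin n → Set ↥X.realization,
      (∀ i, IsOpen (U i)) ∧ (∀ z, ∃ i, z ∈ U i) ∧ ∀ i, TopInessential (U i)) :
    X.CombEssential n := by
  rintro ⟨P, hcover, -, hP⟩
  refine hess ⟨fun i => (↑) ⁻¹' ⋃ v ∈ P i, X.openStar v, fun i => ?_, fun z => ?_,
    fun i => (hP i).topInessential_openStar⟩
  · simp only [preimage_iUnion₂]
    exact isOpen_biUnion fun v _ => X.isOpen_preimage_openStar v
  · obtain ⟨v, hv⟩ := X.exists_mem_openStar z
    obtain ⟨i, hi⟩ := hcover v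
    exact ⟨i, mem_iUnion₂.2 ⟨v, hi, hv⟩⟩

/-- **Lemma (topologically essential implies combinatorially essential).**
If a connected `n`-dimensional simplicial complex `X` is `n`-essential as a topological
space — equivalently (Lemma A.1), its realization cannot be covered by `n` or fewer
inessential open sets — then `X` is combinatorially `n`-essential. -/
theorem combEssential_of_topEssential {V : Type} [Fintype V] [DecidableEq V]
    (X : SComplex V) (n : ℕ) (hn : 1 ≤ n)
    (hconn : X.graph.Connected)
    (hdim : ∀ s ∈ X.faces, s.card ≤ n + 1)
    (hess : ¬ ∃ U : Fin n → Set ↥X.realization,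
      (∀ i, IsOpen (U i)) ∧ (∀ z, ∃ i, z ∈ U i) ∧ ∀ i, TopInessential (U i)) :
    X.CombEssential n :=
  combEssential_of_topEssential_general X n hess
end
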